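/- arXiv:math-ph/9812022 — 10 statements merged into one kernel-verified Lean document; each statement's English description precedes it below -/
import Mathlib

section
/- Let F be a unital C*-algebra and C = C* ⊂ F a constraint set. The set of Dirac states S_D = {ω state on F : ω(C*C) = 0 ∀ C ∈ C} is nonempty if and only if the identity 1 does not belong to the closed left ideal N generated by C in F. -/
/-!
If `ω` is a state with `ω (c⋆ c) = 0` for `c ∈ C`, Cauchy–Schwarz gives `ω (a c) = 0` for all `a`,
so the left ideal generated by `C` lies in the left kernel of `ω`, which misses `1`; a proper left
ideal stays proper after closure because every element within distance `1` of `1` is invertible.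
Conversely, that same fact puts `1` at distance at least `1` from the left ideal. Hahn–Banach
then gives a functional of norm at most `1` that vanishes on the ideal and is `1` at `1`, and a
unital contraction on a C⋆-algebra is positive, hence a state.
-/

/-- A state on a unital C*-algebra: a normalized positive linear functional. -/
def IsState {F : Type*} [NormedRing F] [StarRing F] [NormedAlgebra ℂ F]
    (ω : F →ₗ[ℂ] ℂ) : Prop :=
  ω 1 = 1 ∧ ∀ a : F, ∃ r : ℝ, 0 ≤ r ∧ ω (star a * a) = (r : ℂ)

open scoped ComplexOrder
open Complex Metric

lemma isState_iff {F : Type*} [NormedRing F] [StarRing F] [NormedAlgebra ℂ F]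
    (ω : F →ₗ[ℂ] ℂ) : IsState ω ↔ ω 1 = 1 ∧ ∀ a : F, 0 ≤ ω (star a * a) := by
  simp only [IsState, RCLike.nonneg_iff_exists_ofReal (K := ℂ), eq_comm (a := ω _), ge_iff_le]
  rfl

lemma eq_zero_of_forall_mul_le {v c : ℝ} (h : ∀ t : ℝ, v * t ≤ c) : v = 0 := by
  by_contra hv
  have := h ((c + 1) / v)
  rw [mul_div_cancel₀ _ hv] at this
  linarith

lemma Complex.eq_zero_of_forall_nonneg_add_ofReal_mul {a u : ℂ}
    (h : ∀ s : ℝ, 0 ≤ a + s * u) : u = 0 := by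
  have hre : ∀ s : ℝ, -u.re * s ≤ a.re := fun s => by
    have := (nonneg_iff.mp (h s)).1
    simp only [add_re, mul_re, ofReal_re, ofReal_im, zero_mul, sub_zero] at this
    linarith
  have him : ∀ s : ℝ, u.im * s ≤ -a.im := fun s => by
    have := (nonneg_iff.mp (h s)).2
    simp only [add_im, mul_im, ofReal_re, ofReal_im, zero_mul, add_zero] at this
    linarith
  apply Complex.ext
  · simpa using eq_zero_of_forall_mul_le hre
  · exact eq_zero_of_forall_mul_le him

lemma Submodule.span_mul_eq_restrictScalars_span {R A : Type*} [CommSemiring R] [Semiring A]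
    [Algebra R A] (s : Set A) :
    span R {x : A | ∃ a : A, ∃ c ∈ s, x = a * c} = (Ideal.span s).restrictScalars R := by
  refine le_antisymm (span_le.mpr ?_) fun x hx => ?_
  · rintro _ ⟨a, c, hc, rfl⟩
    exact Ideal.mul_mem_left _ a (Ideal.subset_span hc)
  · obtain ⟨f, hf, rfl⟩ := mem_span_set.mp hx
    exact sum_mem fun m hm => subset_span ⟨f m, m, hf hm, rfl⟩

namespace LinearMap

section LeftKernel

variable {R A : Type*} [CommSemiring R] [Semiring A] [Module R A]

def leftKernel (ω : A →ₗ[R] R) : Ideal A where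
  carrier := {y | ∀ x, ω (x * y) = 0}
  add_mem' hy hz x := by simp [mul_add, hy x, hz x]
  zero_mem' x := by simp
  smul_mem' a y hy x := by simpa [mul_assoc] using hy (x * a)

lemma leftKernel_ne_top {ω : A →ₗ[R] R} (h1 : ω 1 ≠ 0) : ω.leftKernel ≠ ⊤ := fun h =>
  h1 (by simpa using (h ▸ Submodule.mem_top : (1 : A) ∈ ω.leftKernel) 1)

end LeftKernel

section StarAlgebra

variable {A : Type*} [Ring A] [StarRing A] [Algebra ℂ A] [StarModule ℂ A]

lemma map_star_add_smul_mul_add_smul (ω : A →ₗ[ℂ] ℂ) (x y : A) (t : ℂ) :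
    ω (star (x + t • y) * (x + t • y)) = ω (star x * x) + t * ω (star x * y) +
      star t * ω (star y * x) + star t * t * ω (star y * y) := by
  simp only [star_add, star_smul, add_mul, mul_add, smul_mul_assoc, mul_smul_comm,
    map_add, map_smul, smul_eq_mul]
  ring

theorem mem_leftKernel_of_map_star_mul_self_eq_zero {ω : A →ₗ[ℂ] ℂ}
    (hω : ∀ a, 0 ≤ ω (star a * a)) {y : A} (hy : ω (star y * y) = 0) : y ∈ ω.leftKernel := by
  intro x
  obtain ⟨u, rfl⟩ : ∃ u, x = star u := ⟨star x, (star_star x).symm⟩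
  have key (t : ℂ) : 0 ≤ ω (star u * u) + t * ω (star u * y) + star t * ω (star y * u) := by
    have := hω (u + t • y)
    rwa [map_star_add_smul_mul_add_smul, hy, mul_zero, add_zero] at this
  have hsum : ω (star u * y) + ω (star y * u) = 0 :=
    eq_zero_of_forall_nonneg_add_ofReal_mul fun s => by
      have := key s
      simp only [RCLike.star_def, conj_ofReal] at this
      linear_combination this
  have hdiff : I * ω (star u * y) - I * ω (star y * u) = 0 :=
    eq_zero_of_forall_nonneg_add_ofReal_mul fun s => by
      have := key (s * I)
      simp only [star_mul', RCLike.star_def, conj_ofReal, conj_I] at this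
      linear_combination this
  linear_combination (hsum - I * hdiff) / 2 + (ω (star u * y) - ω (star y * u)) / 2 * I_sq

end StarAlgebra

end LinearMap

lemma Ideal.one_le_infDist_one {R : Type*} [NormedRing R] [HasSummableGeomSeries R]
    {I : Ideal R} (hI : I ≠ ⊤) : 1 ≤ infDist 1 (I : Set R) := by
  refine (le_infDist ⟨0, I.zero_mem⟩).mpr fun x hx => not_lt.mp fun hlt => hI ?_
  exact I.eq_top_of_norm_lt_one hx (by rwa [← dist_eq_norm])

lemma Submodule.exists_dual_eq_infDist {𝕜 E : Type*} [RCLike 𝕜] [SeminormedAddCommGroup E]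
    [NormedSpace 𝕜 E] (N : Submodule 𝕜 E) (x : E) :
    ∃ g : StrongDual 𝕜 E, ‖g‖ ≤ 1 ∧ g x = infDist x N ∧ ∀ y ∈ N, g y = 0 := by
  obtain ⟨g, hg, hgx⟩ := exists_dual_vector'' 𝕜 (N.mkQ x)
  refine ⟨g.comp N.mkQL, ?_, ?_, fun y hy => ?_⟩
  · refine ContinuousLinearMap.opNorm_le_bound _ zero_le_one fun y => ?_
    calc ‖g (N.mkQ y)‖ ≤ ‖g‖ * ‖N.mkQ y‖ := g.le_opNorm _
      _ ≤ 1 * ‖y‖ := mul_le_mul hg (Quotient.norm_mk_le N y) (norm_nonneg _) zero_le_one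
  · exact hgx.trans (congrArg _ (QuotientAddGroup.norm_mk (S := N.toAddSubgroup) x))
  · simp [(Quotient.mk_eq_zero N).mpr hy]

section CStarAlgebra

variable {A : Type*} [CStarAlgebra A]

lemma IsSelfAdjoint.norm_add_smul_I_sq_le [Nontrivial A] {h : A} (hh : IsSelfAdjoint h)
    (t : ℝ) : ‖h + ((t : ℂ) * I) • (1 : A)‖ ^ 2 ≤ ‖h‖ ^ 2 + t ^ 2 := by
  have hstar : star (h + ((t : ℂ) * I) • (1 : A)) * (h + ((t : ℂ) * I) • 1) =
      h * h + ((t : ℂ) ^ 2) • 1 := by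
    simp only [star_add, star_smul, hh.star_eq, star_one, star_mul', Complex.star_def, conj_ofReal,
      conj_I, add_mul, mul_add, smul_mul_assoc, mul_smul_comm, smul_add, smul_smul, mul_one, one_mul]
    rw [show (t : ℂ) * I * (t * -I) = t ^ 2 by linear_combination (-(t : ℂ) ^ 2) * I_sq]
    module
  calc ‖h + ((t : ℂ) * I) • (1 : A)‖ ^ 2
      = ‖star (h + ((t : ℂ) * I) • (1 : A)) * (h + ((t : ℂ) * I) • 1)‖ := by
        rw [CStarRing.norm_star_mul_self, sq]
    _ ≤ ‖h * h‖ + ‖((t : ℂ) ^ 2) • (1 : A)‖ := hstar ▸ norm_add_le _ _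
    _ = ‖h‖ ^ 2 + t ^ 2 := by
        rw [hh.norm_mul_self, norm_smul, norm_one, mul_one, norm_pow, norm_real, Real.norm_eq_abs,
          sq_abs]

lemma LinearMap.im_map_eq_zero_of_isSelfAdjoint {φ : A →ₗ[ℂ] ℂ} (h1 : φ 1 = 1)
    (hφ : ∀ x, ‖φ x‖ ≤ ‖x‖) {h : A} (hh : IsSelfAdjoint h) : (φ h).im = 0 := by
  have : Nontrivial A := nontrivial_of_ne 1 0 fun h0 => by simp [h0] at h1
  suffices 2 * (φ h).im = 0 by linarith
  refine eq_zero_of_forall_mul_le (c := ‖h‖ ^ 2 - ‖φ h‖ ^ 2) fun t => ?_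
  have key : ‖φ h + t * I‖ ^ 2 ≤ ‖h‖ ^ 2 + t ^ 2 := calc
    ‖φ h + t * I‖ ^ 2 = ‖φ (h + ((t : ℂ) * I) • 1)‖ ^ 2 := by simp [h1]
    _ ≤ ‖h + ((t : ℂ) * I) • 1‖ ^ 2 := by gcongr; exact hφ _
    _ ≤ ‖h‖ ^ 2 + t ^ 2 := hh.norm_add_smul_I_sq_le t
  simp only [← normSq_eq_norm_sq, normSq_apply, add_re, add_im, mul_re, mul_im, ofReal_re,
    ofReal_im, I_re, I_im] at key ⊢
  nlinarith

theorem LinearMap.map_nonneg_of_map_one_of_norm_le [PartialOrder A] [StarOrderedRing A]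
    {φ : A →ₗ[ℂ] ℂ} (h1 : φ 1 = 1) (hφ : ∀ x, ‖φ x‖ ≤ ‖x‖) {b : A} (hb : 0 ≤ b) : 0 ≤ φ b := by
  have hφr : ∀ r : ℝ, φ (algebraMap ℝ A r) = r := fun r => by
    rw [Algebra.algebraMap_eq_smul_one, ← Complex.coe_smul, map_smul, h1, smul_eq_mul, mul_one]
  have hgap : ‖algebraMap ℝ A ‖b‖ - b‖ ≤ ‖b‖ :=
    (CStarAlgebra.norm_le_iff_le_algebraMap _ (norm_nonneg b)
      (sub_nonneg.mpr hb.isSelfAdjoint.le_algebraMap_norm_self)).mpr (sub_le_self _ hb)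
  have hdist : ‖(‖b‖ : ℂ) - φ b‖ ≤ ‖b‖ := by simpa [hφr] using (hφ _).trans hgap
  have hre := (re_le_norm ((‖b‖ : ℂ) - φ b)).trans hdist
  rw [sub_re, ofReal_re] at hre
  exact nonneg_iff.mpr ⟨by linarith, (im_map_eq_zero_of_isSelfAdjoint h1 hφ hb.isSelfAdjoint).symm⟩

theorem Ideal.exists_isState_forall_mem_eq_zero {N : Ideal A} (hN : N ≠ ⊤) :
    ∃ ω : A →ₗ[ℂ] ℂ, IsState ω ∧ ∀ x ∈ N, ω x = 0 := by
  set d := infDist (1 : A) N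
  have hd : 1 ≤ d := Ideal.one_le_infDist_one hN
  obtain ⟨g, hg, hg1, hgN⟩ : ∃ g : StrongDual ℂ A, ‖g‖ ≤ 1 ∧ g 1 = d ∧ ∀ x ∈ N, g x = 0 :=
    (N.restrictScalars ℂ).exists_dual_eq_infDist 1
  let ω : A →ₗ[ℂ] ℂ := (d : ℂ)⁻¹ • (g : A →ₗ[ℂ] ℂ)
  have hω1 : ω 1 = 1 := by simp [ω, hg1, (zero_lt_one.trans_le hd).ne']
  have hωle : ∀ x, ‖ω x‖ ≤ ‖x‖ := fun x => calc
    ‖ω x‖ = d⁻¹ * ‖g x‖ := by simp [ω, abs_of_nonneg (zero_le_one.trans hd)]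
    _ ≤ 1 * (1 * ‖x‖) :=
      mul_le_mul (inv_le_one_of_one_le₀ hd) ((g.le_opNorm x).trans (by gcongr))
        (norm_nonneg _) zero_le_one
    _ = ‖x‖ := by ring
  let _ : PartialOrder A := CStarAlgebra.spectralOrder A
  let _ : StarOrderedRing A := CStarAlgebra.spectralOrderedRing A
  refine ⟨ω, (isState_iff ω).mpr ⟨hω1, fun a => ?_⟩, fun x hx => by simp [ω, hgN x hx]⟩
  exact LinearMap.map_nonneg_of_map_one_of_norm_le hω1 hωle (star_mul_self_nonneg a)

end CStarAlgebra

theorem stmt_3_general {F : Type*} [NormedRing F] [StarRing F] [CStarRing F]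
    [NormedAlgebra ℂ F] [StarModule ℂ F] [CompleteSpace F]
    (C : Set F) :
    (∃ ω : F →ₗ[ℂ] ℂ, IsState ω ∧ ∀ c ∈ C, ω (star c * c) = 0) ↔
      (1 : F) ∉ closure ((Submodule.span ℂ {x : F | ∃ a : F, ∃ c ∈ C, x = a * c} : Submodule ℂ F) : Set F) := by
  rw [Submodule.span_mul_eq_restrictScalars_span, Submodule.coe_restrictScalars]
  constructor
  · rintro ⟨ω, hω, hωC⟩ h1
    have hle : Ideal.span C ≤ ω.leftKernel := Ideal.span_le.mpr fun c hc =>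
      LinearMap.mem_leftKernel_of_map_star_mul_self_eq_zero ((isState_iff ω).mp hω).2 (hωC c hc)
    have hne : Ideal.span C ≠ ⊤ := ne_top_of_le_ne_top (ω.leftKernel_ne_top (by simp [hω.1])) hle
    exact Ideal.closure_ne_top _ hne ((Ideal.eq_top_iff_one _).mpr h1)
  · intro h
    let _ : CStarAlgebra F := {}
    obtain ⟨ω, hω, hωN⟩ := Ideal.exists_isState_forall_mem_eq_zero
      ((Ideal.ne_top_iff_one _).mpr fun h1 => h (subset_closure h1))
    exact ⟨ω, hω, fun c hc => hωN _ (Ideal.mul_mem_left _ _ (Ideal.subset_span hc))⟩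

/-- For a self-adjoint constraint set `C = C*` in a unital C*-algebra `F`, the set of
Dirac states `{ω : ω (c* c) = 0 ∀ c ∈ C}` is nonempty iff the identity does not belong to
the closed left ideal `N = [F C]` generated by `C`. -/
theorem stmt_3 {F : Type*} [NormedRing F] [StarRing F] [CStarRing F]
    [NormedAlgebra ℂ F] [StarModule ℂ F] [CompleteSpace F]
    (C : Set F) (hC : ∀ c ∈ C, star c ∈ C) :
    (∃ ω : F →ₗ[ℂ] ℂ, IsState ω ∧ ∀ c ∈ C, ω (star c * c) = 0) ↔
      (1 : F) ∉ closure ((Submodule.span ℂ {x : F | ∃ a : F, ∃ c ∈ C, x = a * c} : Submodule ℂ F) : Set F) :=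
  stmt_3_general C
end

section
/- Let F be a unital C*-algebra, C = C* ⊂ F, N = [F C] the closed left ideal generated by C, and D = N ∩ N*. Then the set O := {A ∈ F : AD - DA ∈ D for all D ∈ D} equals the relative multiplier algebra M_F(D) := {A ∈ F : AD ∈ D and DA ∈ D for all D ∈ D}. -/
/-- Let `C = C*` be a self-adjoint subset of a unital C*-algebra `F`, `N = [F C]` the closed
left ideal generated by `C`, and `D = N ∩ N* = [F C] ∩ [C F]`.  Then the weak commutant
`O = {A : [A, D] ⊆ D}` equals the relative multiplier algebra
`M_F(D) = {A : A D ⊆ D ⊇ D A}`. -/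
theorem stmt_5 {F : Type*} [NormedRing F] [StarRing F] [CStarRing F]
    [NormedAlgebra ℂ F] [StarModule ℂ F] [CompleteSpace F]
    (C : Set F) (hC : ∀ c ∈ C, star c ∈ C) :
    let N₁ : Set F := closure ((Submodule.span ℂ {x : F | ∃ a : F, ∃ c ∈ C, x = a * c} : Submodule ℂ F) : Set F)
    let N₂ : Set F := closure ((Submodule.span ℂ {x : F | ∃ a : F, ∃ c ∈ C, x = c * a} : Submodule ℂ F) : Set F)
    let D : Set F := N₁ ∩ N₂
    {A : F | ∀ d ∈ D, A * d - d * A ∈ D} = {A : F | ∀ d ∈ D, A * d ∈ D ∧ d * A ∈ D} := by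
  intro N₁ N₂ D
  -- N₁ and N₂ as topological closures of submodules
  set S₁ : Set F := {x : F | ∃ a : F, ∃ c ∈ C, x = a * c} with hS₁
  set S₂ : Set F := {x : F | ∃ a : F, ∃ c ∈ C, x = c * a} with hS₂
  have hN₁ : N₁ = ((Submodule.span ℂ S₁).topologicalClosure : Set F) := rfl
  have hN₂ : N₂ = ((Submodule.span ℂ S₂).topologicalClosure : Set F) := rfl
  -- N₁ is a left ideal
  have hleft : ∀ f x : F, x ∈ N₁ → f * x ∈ N₁ := by
    intro f x hx
    rw [hN₁] at hx ⊢
    have hspan : ∀ y ∈ Submodule.span ℂ S₁, f * y ∈ Submodule.span ℂ S₁ := by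
      intro y hy
      induction hy using Submodule.span_induction with
      | mem z hz =>
        obtain ⟨a, c, hc, rfl⟩ := hz
        exact Submodule.subset_span ⟨f * a, c, hc, (mul_assoc f a c).symm⟩
      | zero => simpa using (Submodule.span ℂ S₁).zero_mem
      | add y z _ _ hy hz => simpa [mul_add] using Submodule.add_mem _ hy hz
      | smul r y _ hy => simpa [mul_smul_comm] using Submodule.smul_mem _ r hy
    have := map_mem_closure (continuous_mul_left f) hx
      (fun y hy => hspan y hy)
    simpa using this
  -- N₂ is a right ideal
  have hright : ∀ x f : F, x ∈ N₂ → x * f ∈ N₂ := by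
    intro x f hx
    rw [hN₂] at hx ⊢
    have hspan : ∀ y ∈ Submodule.span ℂ S₂, y * f ∈ Submodule.span ℂ S₂ := by
      intro y hy
      induction hy using Submodule.span_induction with
      | mem z hz =>
        obtain ⟨a, c, hc, rfl⟩ := hz
        exact Submodule.subset_span ⟨a * f, c, hc, mul_assoc c a f⟩
      | zero => simpa using (Submodule.span ℂ S₂).zero_mem
      | add y z _ _ hy hz => simpa [add_mul] using Submodule.add_mem _ hy hz
      | smul r y _ hy => simpa [smul_mul_assoc] using Submodule.smul_mem _ r hy
    have := map_mem_closure (continuous_mul_right f) hx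
      (fun y hy => hspan y hy)
    simpa using this
  -- N₁, N₂ closed under addition/subtraction
  have hsub₁ : ∀ x y : F, x ∈ N₁ → y ∈ N₁ → x - y ∈ N₁ := by
    intro x y hx hy
    rw [hN₁] at hx hy ⊢
    exact Submodule.sub_mem _ hx hy
  have hsub₂ : ∀ x y : F, x ∈ N₂ → y ∈ N₂ → x - y ∈ N₂ := by
    intro x y hx hy
    rw [hN₂] at hx hy ⊢
    exact Submodule.sub_mem _ hx hy
  ext A
  simp only [Set.mem_setOf_eq]
  constructor
  · intro h d hd
    have hcomm := h d hd
    obtain ⟨hd₁, hd₂⟩ := hd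
    have hAd₁ : A * d ∈ N₁ := hleft A d hd₁
    have hdA₂ : d * A ∈ N₂ := hright d A hd₂
    have hneg : -(d * A) ∈ N₂ := by
      rw [hN₂] at hdA₂ ⊢
      exact Submodule.neg_mem _ hdA₂
    have hAd₂ : A * d ∈ N₂ := by
      have := hsub₂ (A * d - d * A) (-(d * A)) hcomm.2 hneg
      simpa [sub_neg_eq_add, sub_add_cancel] using this
    have hdA₁ : d * A ∈ N₁ := by
      have := hsub₁ (A * d) (A * d - d * A) hAd₁ hcomm.1
      simpa using this
    exact ⟨⟨hAd₁, hAd₂⟩, ⟨hdA₁, hdA₂⟩⟩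
  · intro h d hd
    obtain ⟨⟨h₁, h₂⟩, ⟨h₃, h₄⟩⟩ := h d hd
    exact ⟨hsub₁ _ _ h₁ h₃, hsub₂ _ _ h₂ h₄⟩
end

section
/- Let F be a unital C*-algebra, C = C* ⊂ F a constraint set, N = [F C], D = N ∩ N*, and O = M_F(D). Then O = {A ∈ F : AC - CA ∈ D for all C ∈ C}. -/
private lemma clspan_map {F : Type*} [NormedRing F] [NormedAlgebra ℂ F]
    (f : F →L[ℂ] F) (S : Set F) (M : Submodule ℂ F) (hM : IsClosed (M : Set F))
    (h : ∀ s ∈ S, f s ∈ M) {x : F}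
    (hx : x ∈ closure ((Submodule.span ℂ S : Submodule ℂ F) : Set F)) : f x ∈ M := by
  have h1 : Submodule.span ℂ S ≤ M.comap (f : F →ₗ[ℂ] F) := Submodule.span_le.mpr h
  have h2 : closure ((Submodule.span ℂ S : Submodule ℂ F) : Set F) ⊆ f ⁻¹' (M : Set F) :=
    closure_minimal (fun y hy => h1 hy) (hM.preimage f.continuous)
  exact h2 hx

/-- Let `C = C*` be a self-adjoint constraint set in a unital C*-algebra `F`,
`N = [F C]`, `D = [F C] ∩ [C F]` and `O = M_F(D)` the relative multiplier algebra.
Then `O = {A ∈ F : [A, C] ⊆ D}`. -/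
theorem stmt_6 {F : Type*} [NormedRing F] [StarRing F] [CStarRing F]
    [NormedAlgebra ℂ F] [StarModule ℂ F] [CompleteSpace F]
    (C : Set F) (hC : ∀ c ∈ C, star c ∈ C) :
    let N₁ : Set F := closure ((Submodule.span ℂ {x : F | ∃ a : F, ∃ c ∈ C, x = a * c} : Submodule ℂ F) : Set F)
    let N₂ : Set F := closure ((Submodule.span ℂ {x : F | ∃ a : F, ∃ c ∈ C, x = c * a} : Submodule ℂ F) : Set F)
    let D : Set F := N₁ ∩ N₂
    {A : F | ∀ d ∈ D, A * d ∈ D ∧ d * A ∈ D} = {A : F | ∀ c ∈ C, A * c - c * A ∈ D} := by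
  intro N₁ N₂ D
  set S₁ : Set F := {x : F | ∃ a : F, ∃ c ∈ C, x = a * c} with hS₁
  set S₂ : Set F := {x : F | ∃ a : F, ∃ c ∈ C, x = c * a} with hS₂
  set M₁ : Submodule ℂ F := (Submodule.span ℂ S₁).topologicalClosure with hM₁
  set M₂ : Submodule ℂ F := (Submodule.span ℂ S₂).topologicalClosure with hM₂
  have hN₁ : N₁ = (M₁ : Set F) := (Submodule.topologicalClosure_coe _).symm
  have hN₂ : N₂ = (M₂ : Set F) := (Submodule.topologicalClosure_coe _).symm
  have hM₁c : IsClosed (M₁ : Set F) := Submodule.isClosed_topologicalClosure _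
  have hM₂c : IsClosed (M₂ : Set F) := Submodule.isClosed_topologicalClosure _
  have hsub₁ : ∀ s ∈ S₁, s ∈ M₁ := fun s hs =>
    Submodule.le_topologicalClosure _ (Submodule.subset_span hs)
  have hsub₂ : ∀ s ∈ S₂, s ∈ M₂ := fun s hs =>
    Submodule.le_topologicalClosure _ (Submodule.subset_span hs)
  -- C ⊆ D
  have hCD : ∀ c ∈ C, c ∈ D := by
    intro c hc
    constructor
    · rw [hN₁]; exact hsub₁ c ⟨1, c, hc, (one_mul c).symm⟩
    · rw [hN₂]; exact hsub₂ c ⟨1, c, hc, (mul_one c).symm⟩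
  -- M₁ is a left ideal
  have hleft : ∀ (b : F), ∀ x ∈ M₁, b * x ∈ M₁ := by
    intro b x hx
    have hx' : x ∈ closure ((Submodule.span ℂ S₁ : Submodule ℂ F) : Set F) := by
      rw [← Submodule.topologicalClosure_coe]; exact hx
    have := clspan_map (ContinuousLinearMap.mul ℂ F b) S₁ M₁ hM₁c
      (fun s hs => by
        obtain ⟨a, c, hc, rfl⟩ := hs
        simpa [← mul_assoc] using hsub₁ ((b * a) * c) ⟨b * a, c, hc, rfl⟩) hx'
    simpa using this
  -- M₂ is a right ideal
  have hright : ∀ (b : F), ∀ x ∈ M₂, x * b ∈ M₂ := by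
    intro b x hx
    have hx' : x ∈ closure ((Submodule.span ℂ S₂ : Submodule ℂ F) : Set F) := by
      rw [← Submodule.topologicalClosure_coe]; exact hx
    have := clspan_map ((ContinuousLinearMap.mul ℂ F).flip b) S₂ M₂ hM₂c
      (fun s hs => by
        obtain ⟨a, c, hc, rfl⟩ := hs
        simpa [mul_assoc] using hsub₂ (c * (a * b)) ⟨a * b, c, hc, rfl⟩) hx'
    simpa using this
  ext A
  simp only [Set.mem_setOf_eq]
  constructor
  · intro hA c hc
    have h1 := hA c (hCD c hc)
    refine ⟨?_, ?_⟩
    · rw [hN₁] at *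
      exact M₁.sub_mem h1.1.1 h1.2.1
    · rw [hN₂] at *
      exact M₂.sub_mem h1.1.2 h1.2.2
  · intro hA d hd
    obtain ⟨hd₁, hd₂⟩ := hd
    rw [hN₁] at hd₁; rw [hN₂] at hd₂
    have hd₁' : d ∈ closure ((Submodule.span ℂ S₁ : Submodule ℂ F) : Set F) := by
      rw [← Submodule.topologicalClosure_coe]; exact hd₁
    have hd₂' : d ∈ closure ((Submodule.span ℂ S₂ : Submodule ℂ F) : Set F) := by
      rw [← Submodule.topologicalClosure_coe]; exact hd₂
    refine ⟨⟨?_, ?_⟩, ⟨?_, ?_⟩⟩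
    · -- A * d ∈ N₁
      rw [hN₁]; exact hleft A d hd₁
    · -- A * d ∈ N₂
      rw [hN₂]
      have := clspan_map (ContinuousLinearMap.mul ℂ F A) S₂ M₂ hM₂c
        (fun s hs => by
          obtain ⟨a, c, hc, rfl⟩ := hs
          have key : A * (c * a) = (A * c - c * A) * a + c * (A * a) := by
            noncomm_ring
          have t1 : (A * c - c * A) * a ∈ M₂ := by
            have := (hA c hc).2
            rw [hN₂] at this
            exact hright a _ this
          have t2 : c * (A * a) ∈ M₂ := hsub₂ _ ⟨A * a, c, hc, rfl⟩
          simpa [key] using M₂.add_mem t1 t2) hd₂'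
      simpa using this
    · -- d * A ∈ N₁
      rw [hN₁]
      have := clspan_map ((ContinuousLinearMap.mul ℂ F).flip A) S₁ M₁ hM₁c
        (fun s hs => by
          obtain ⟨a, c, hc, rfl⟩ := hs
          have key : (a * c) * A = (a * A) * c - a * (A * c - c * A) := by
            noncomm_ring
          have t1 : (a * A) * c ∈ M₁ := hsub₁ _ ⟨a * A, c, hc, rfl⟩
          have t2 : a * (A * c - c * A) ∈ M₁ := by
            have := (hA c hc).1
            rw [hN₁] at this
            exact hleft a _ this
          simpa [key] using M₁.sub_mem t1 t2) hd₁'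
      simpa using this
    · -- d * A ∈ N₂
      rw [hN₂]; exact hright A d hd₂
end

section
/- In the setting of the T-procedure (F unital C*-algebra, C = C* first class, D = [F C] ∩ [C F], O = M_F(D)), one has D = [O C] = [C O], i.e. D is the closed linear span of products of observables with constraints. -/
/-!
An element `d ∈ D` lies in `[F C]`, so it is close to a finite sum `y = ∑ aᵢ cᵢ` with `cᵢ ∈ C`.
Put `h = ∑ cᵢ⋆ cᵢ` and `e = b h` with `b = (max h δ)⁻¹` (functional calculus). Then `0 ≤ 1 - e ≤ 1`
and `‖cᵢ (1 - e)‖² ≤ ‖(1 - e) h (1 - e)‖ ≤ δ`, so `e` is a right approximate unit for the `cᵢ`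
and `d ≈ d e = ∑ (d b cᵢ⋆) cᵢ`. Since `d ∈ [C F]` and `cᵢ⋆ ∈ C`, each `d b cᵢ⋆` lies in
`[C F] ∩ [F C] = D ⊆ O`; hence `D ⊆ [O C]`. Conversely `O C ⊆ D`, and `D = [C O]` follows by
applying `⋆`, which preserves `D` and `O`.
-/

open Submodule

section ClosedSpan

theorem map_mem_closure_span {R M : Type*} [Semiring R] [AddCommMonoid M] [Module R M]
    [TopologicalSpace M] {σ : R →+* R} [RingHomSurjective σ] (f : M →SL[σ] M) {s t : Set M}
    (hf : ∀ x ∈ s, f x ∈ t) {x : M} (hx : x ∈ closure (span R s : Set M)) :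
    f x ∈ closure (span R t : Set M) :=
  map_mem_closure f.continuous hx fun _ hy =>
    (span_le.2 fun y hy => subset_span (hf y hy) :
      span R s ≤ (span R t).comap (f : M →ₛₗ[σ] M)) hy

theorem star_mem_closure_span {R A : Type*} [CommSemiring R] [StarRing R] [AddCommMonoid A]
    [StarAddMonoid A] [Module R A] [StarModule R A] [TopologicalSpace A] [ContinuousStar A]
    {s t : Set A} (hst : ∀ x ∈ s, star x ∈ t) {x : A}
    (hx : x ∈ closure (span R s : Set A)) : star x ∈ closure (span R t : Set A) :=
  map_mem_closure_span (starL R : A ≃L⋆[R] A).toContinuousLinearMap hst hx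

variable {𝕜 A : Type*} [NontriviallyNormedField 𝕜] [NormedRing A] [NormedAlgebra 𝕜 A]

theorem mul_mem_closure_span_mul_left {C : Set A} (b : A) {x : A}
    (hx : x ∈ closure (span 𝕜 {x | ∃ a : A, ∃ c ∈ C, x = a * c} : Set A)) :
    b * x ∈ closure (span 𝕜 {x | ∃ a : A, ∃ c ∈ C, x = a * c} : Set A) :=
  map_mem_closure_span (ContinuousLinearMap.mul 𝕜 A b)
    (by rintro _ ⟨a, c, hc, rfl⟩; exact ⟨b * a, c, hc, (mul_assoc _ _ _).symm⟩) hx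

theorem mul_mem_closure_span_mul_right {C : Set A} (b : A) {x : A}
    (hx : x ∈ closure (span 𝕜 {x | ∃ a : A, ∃ c ∈ C, x = c * a} : Set A)) :
    x * b ∈ closure (span 𝕜 {x | ∃ a : A, ∃ c ∈ C, x = c * a} : Set A) :=
  map_mem_closure_span ((ContinuousLinearMap.mul 𝕜 A).flip b)
    (by rintro _ ⟨a, c, hc, rfl⟩; exact ⟨a * b, c, hc, mul_assoc _ _ _⟩) hx

end ClosedSpan

theorem exists_eq_sum_mul_of_mem_span {R A : Type*} [CommSemiring R] [Semiring A] [Algebra R A]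
    {C : Set A} {y : A} (hy : y ∈ span R {x | ∃ a : A, ∃ c ∈ C, x = a * c}) :
    ∃ (n : ℕ) (a c : Fin n → A), (∀ i, c i ∈ C) ∧ y = ∑ i, a i * c i := by
  obtain ⟨n, r, g, rfl⟩ := mem_span_set'.1 hy
  choose a c hc hg using fun i => (g i).2
  exact ⟨n, fun i => r i • a i, c, hc, by simp only [hg, smul_mul_assoc]⟩

theorem one_sub_div_max_mem_Icc {t δ : ℝ} (ht : 0 ≤ t) (hδ : 0 < δ) :
    1 - t / max t δ ∈ Set.Icc 0 1 := by
  have hm : 0 < max t δ := lt_max_of_lt_right hδ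
  constructor
  · rw [sub_nonneg, div_le_one hm]; exact le_max_left t δ
  · linarith [div_nonneg ht hm.le]

theorem one_sub_div_max_mul_mul_le {t δ : ℝ} (ht : 0 ≤ t) (hδ : 0 < δ) :
    (1 - t / max t δ) * t * (1 - t / max t δ) ≤ δ := by
  obtain ⟨h0, h1⟩ := one_sub_div_max_mem_Icc ht hδ
  rcases le_total t δ with htδ | hδt
  · nlinarith [mul_le_mul_of_nonneg_left h1 (mul_nonneg h0 ht)]
  · simp [max_eq_left hδt, div_self (hδ.trans_le hδt).ne', hδ.le]

section CStarAlgebra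

variable {A : Type*} [CStarAlgebra A]

theorem norm_mul_sq_le_of_star_mul_self_le [PartialOrder A] [StarOrderedRing A] {c h : A}
    (hc : star c * c ≤ h) (w : A) : ‖c * w‖ ^ 2 ≤ ‖star w * h * w‖ := by
  have hle := star_left_conjugate_le_conjugate hc w
  rw [sq, ← CStarRing.norm_star_mul_self, star_mul, mul_assoc, ← mul_assoc (star c),
    ← mul_assoc]
  exact CStarAlgebra.norm_le_norm_of_nonneg_of_le
    (star_left_conjugate_nonneg (star_mul_self_nonneg c) w) hle

theorem exists_norm_mul_one_sub_mul_le [PartialOrder A] [StarOrderedRing A] {h : A} (hh : 0 ≤ h)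
    {ε : ℝ} (hε : 0 < ε) :
    ∃ b : A, ‖1 - b * h‖ ≤ 1 ∧ ∀ c : A, star c * c ≤ h → ‖c * (1 - b * h)‖ ≤ ε := by
  set δ := ε ^ 2
  have hδ : 0 < δ := by positivity
  set k : ℝ → ℝ := fun t => (max t δ)⁻¹
  have hk : Continuous k :=
    (continuous_id.max continuous_const).inv₀ fun t => (lt_max_of_lt_right hδ).ne'
  set f : ℝ → ℝ := fun t => 1 - t / max t δ
  have hf : Continuous f := continuous_const.sub (continuous_id.mul hk)
  have hw : 1 - cfc k h * h = cfc f h := by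
    have hfun : f = fun t => 1 - k t * t := by
      funext t; simp only [f, k, div_eq_inv_mul]
    rw [hfun, cfc_sub (fun _ => 1) (fun t => k t * t) h continuousOn_const
      (hk.mul continuous_id).continuousOn, cfc_const_one ℝ h,
      cfc_mul k (fun t => t) h hk.continuousOn continuous_id.continuousOn, cfc_id' ℝ h]
  have hspec : ∀ t ∈ spectrum ℝ h, 0 ≤ t := fun t ht => spectrum_nonneg_of_nonneg hh ht
  refine ⟨cfc k h, ?_, fun c hc => ?_⟩
  · rw [hw]
    refine norm_cfc_le zero_le_one fun t ht => ?_
    obtain ⟨h0, h1⟩ := one_sub_div_max_mem_Icc (hspec t ht) hδ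
    rw [Real.norm_eq_abs, abs_le]
    exact ⟨by linarith, h1⟩
  · have hconj : star (cfc f h) * h * cfc f h = cfc (fun t => f t * t * f t) h := by
      rw [(cfc_predicate f h).star_eq, cfc_mul (fun t => f t * t) f h
        (hf.mul continuous_id).continuousOn hf.continuousOn,
        cfc_mul f (fun t => t) h hf.continuousOn continuous_id.continuousOn, cfc_id' ℝ h]
    have hnorm : ‖star (cfc f h) * h * cfc f h‖ ≤ ε ^ 2 := by
      rw [hconj]
      refine norm_cfc_le hδ.le fun t ht => ?_
      have h0 := (one_sub_div_max_mem_Icc (hspec t ht) hδ).1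
      rw [Real.norm_eq_abs, abs_of_nonneg (mul_nonneg (mul_nonneg h0 (hspec t ht)) h0)]
      exact one_sub_div_max_mul_mul_le (hspec t ht) hδ
    rw [hw]
    exact (pow_le_pow_iff_left₀ (norm_nonneg _) hε.le two_ne_zero).1
      ((norm_mul_sq_le_of_star_mul_self_le hc _).trans hnorm)

theorem mem_closure_span_mul_of_forall_mul_mul_star_mem {C O : Set A} {d : A}
    (hd : d ∈ closure (span ℂ {x | ∃ a : A, ∃ c ∈ C, x = a * c} : Set A))
    (hO : ∀ b, ∀ c ∈ C, d * b * star c ∈ O) :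
    d ∈ closure (span ℂ {x | ∃ a ∈ O, ∃ c ∈ C, x = a * c} : Set A) := by
  let _ := CStarAlgebra.spectralOrder A
  let _ := CStarAlgebra.spectralOrderedRing A
  rw [Metric.mem_closure_iff] at hd ⊢
  intro ε hε
  obtain ⟨y, hy, hdy⟩ := hd (ε / 2) (half_pos hε)
  obtain ⟨n, a, c, hc, rfl⟩ := exists_eq_sum_mul_of_mem_span hy
  set K := ∑ i, ‖a i‖
  set h := ∑ i, star (c i) * c i
  have hK : 0 ≤ K := Finset.sum_nonneg fun i _ => norm_nonneg (a i)
  have hch : ∀ i, star (c i) * c i ≤ h := fun i =>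
    Finset.single_le_sum (f := fun j => star (c j) * c j)
      (fun j _ => star_mul_self_nonneg (c j)) (Finset.mem_univ i)
  obtain ⟨b, hw, hcw⟩ := exists_norm_mul_one_sub_mul_le
    (Finset.sum_nonneg fun i _ => star_mul_self_nonneg (c i))
    (div_pos hε (by positivity : (0 : ℝ) < 2 * (K + 1)))
  refine ⟨d * (b * h), ?_, ?_⟩
  · rw [Finset.mul_sum, Finset.mul_sum]
    exact sum_mem fun i _ => subset_span
      ⟨d * b * star (c i), hO b (c i) (hc i), c i, hc i, by simp only [mul_assoc]⟩
  · set w := 1 - b * h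
    have hyw : ‖(∑ i, a i * c i) * w‖ ≤ K * (ε / (2 * (K + 1))) := by
      rw [Finset.sum_mul, Finset.sum_mul]
      refine (norm_sum_le _ _).trans (Finset.sum_le_sum fun i _ => ?_)
      rw [mul_assoc]
      exact (norm_mul_le _ _).trans
        (mul_le_mul_of_nonneg_left (hcw (c i) (hch i)) (norm_nonneg _))
    have hK' : K * (ε / (2 * (K + 1))) ≤ ε / 2 := by
      rw [mul_div_assoc', div_le_div_iff₀ (by positivity) two_pos]
      nlinarith
    calc dist d (d * (b * h)) = ‖(d - ∑ i, a i * c i) * w + (∑ i, a i * c i) * w‖ := by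
          rw [dist_eq_norm, ← add_mul, sub_add_cancel, mul_sub, mul_one]
      _ ≤ ‖d - ∑ i, a i * c i‖ * 1 + K * (ε / (2 * (K + 1))) :=
          (norm_add_le _ _).trans (add_le_add ((norm_mul_le _ _).trans
            (mul_le_mul_of_nonneg_left hw (norm_nonneg _))) hyw)
      _ < ε := by rw [mul_one, ← dist_eq_norm]; linarith

end CStarAlgebra

theorem stmt_7_general {F : Type*} [NormedRing F] [StarRing F] [CStarRing F]
    [NormedAlgebra ℂ F] [StarModule ℂ F] [CompleteSpace F]
    (C : Set F) (hC : ∀ c ∈ C, star c ∈ C) :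
    let N₁ : Set F := closure ((Submodule.span ℂ {x : F | ∃ a : F, ∃ c ∈ C, x = a * c} : Submodule ℂ F) : Set F)
    let N₂ : Set F := closure ((Submodule.span ℂ {x : F | ∃ a : F, ∃ c ∈ C, x = c * a} : Submodule ℂ F) : Set F)
    let D : Set F := N₁ ∩ N₂
    let O : Set F := {A : F | ∀ d ∈ D, A * d ∈ D ∧ d * A ∈ D}
    D = closure ((Submodule.span ℂ {x : F | ∃ a ∈ O, ∃ c ∈ C, x = a * c} : Submodule ℂ F) : Set F) ∧
    D = closure ((Submodule.span ℂ {x : F | ∃ a ∈ O, ∃ c ∈ C, x = c * a} : Submodule ℂ F) : Set F) := by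
  let _ : CStarAlgebra F := {}
  intro N₁ N₂ D O
  have hCD : C ⊆ D := fun c hc =>
    ⟨subset_closure (subset_span ⟨1, c, hc, (one_mul c).symm⟩),
      subset_closure (subset_span ⟨1, c, hc, (mul_one c).symm⟩)⟩
  have hDO : D ⊆ O := fun x hx y hy =>
    ⟨⟨mul_mem_closure_span_mul_left x hy.1, mul_mem_closure_span_mul_right y hx.2⟩,
      ⟨mul_mem_closure_span_mul_left y hx.1, mul_mem_closure_span_mul_right x hy.2⟩⟩
  have hDstar : ∀ x ∈ D, star x ∈ D := fun x hx => by
    refine ⟨star_mem_closure_span ?_ hx.2, star_mem_closure_span ?_ hx.1⟩ <;>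
      rintro _ ⟨a, c, hc, rfl⟩ <;> exact ⟨star a, star c, hC c hc, star_mul _ _⟩
  have hOstar : ∀ a ∈ O, star a ∈ O := fun a ha d hd =>
    ⟨by simpa using hDstar _ (ha _ (hDstar d hd)).2,
      by simpa using hDstar _ (ha _ (hDstar d hd)).1⟩
  have hclosure_subset : ∀ {s : Set F}, s ⊆ D → closure (span ℂ s : Set F) ⊆ D := fun hs =>
    closure_minimal
      (span_le (p := (span ℂ _).topologicalClosure ⊓ (span ℂ _).topologicalClosure).2 hs)
      (isClosed_closure.inter isClosed_closure)
  have hD_subset : D ⊆ closure (span ℂ {x | ∃ a ∈ O, ∃ c ∈ C, x = a * c} : Set F) := fun d hd =>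
    mem_closure_span_mul_of_forall_mul_mul_star_mem hd.1 fun b c hc =>
      hDO ⟨mul_mem_closure_span_mul_left _ (hCD (hC c hc)).1,
        mul_mem_closure_span_mul_right _ (mul_mem_closure_span_mul_right b hd.2)⟩
  refine ⟨hD_subset.antisymm (hclosure_subset ?_),
    subset_antisymm (fun d hd => ?_) (hclosure_subset ?_)⟩
  · rintro _ ⟨a, ha, c, hc, rfl⟩; exact (ha c (hCD hc)).1
  · simpa using star_mem_closure_span (by
      rintro _ ⟨a, ha, c, hc, rfl⟩; exact ⟨star a, hOstar a ha, star c, hC c hc, star_mul _ _⟩)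
      (hD_subset (hDstar d hd))
  · rintro _ ⟨a, ha, c, hc, rfl⟩; exact (ha c (hCD hc)).2

/-- T-procedure: for a first-class self-adjoint constraint set `C` (i.e. `1 ∉ C*(C)`)
in a unital C*-algebra `F`, with `D = [F C] ∩ [C F]` and `O = M_F(D)`, one has
`D = [O C] = [C O]`. -/
theorem stmt_7 {F : Type*} [NormedRing F] [StarRing F] [CStarRing F]
    [NormedAlgebra ℂ F] [StarModule ℂ F] [CompleteSpace F]
    (C : Set F) (hC : ∀ c ∈ C, star c ∈ C)
    (hfc : (1 : F) ∉ closure ((NonUnitalStarAlgebra.adjoin ℂ C : NonUnitalStarSubalgebra ℂ F) : Set F)) :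
    let N₁ : Set F := closure ((Submodule.span ℂ {x : F | ∃ a : F, ∃ c ∈ C, x = a * c} : Submodule ℂ F) : Set F)
    let N₂ : Set F := closure ((Submodule.span ℂ {x : F | ∃ a : F, ∃ c ∈ C, x = c * a} : Submodule ℂ F) : Set F)
    let D : Set F := N₁ ∩ N₂
    let O : Set F := {A : F | ∀ d ∈ D, A * d ∈ D ∧ d * A ∈ D}
    D = closure ((Submodule.span ℂ {x : F | ∃ a ∈ O, ∃ c ∈ C, x = a * c} : Submodule ℂ F) : Set F) ∧
    D = closure ((Submodule.span ℂ {x : F | ∃ a ∈ O, ∃ c ∈ C, x = c * a} : Submodule ℂ F) : Set F) :=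
  stmt_7_general C hC
end

section
/- For unitary constraints C = U - 1 with U a set of unitaries in a unital C*-algebra F, the observable algebra satisfies O = {A ∈ F : U A U* - A ∈ D for all U ∈ U}, and U ⊆ O. -/
/-- Auxiliary: a continuous linear map sending generators into a closed submodule `T`
sends the closure of the span into `T`. -/
lemma stmt_8_aux {F : Type*} [NormedRing F] [NormedAlgebra ℂ F]
    (T : Submodule ℂ F) (hT : IsClosed (T : Set F)) (f : F →L[ℂ] F)
    (gens : Set F) (h : ∀ x ∈ gens, f x ∈ T)
    {x : F} (hx : x ∈ closure ((Submodule.span ℂ gens : Submodule ℂ F) : Set F)) :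
    f x ∈ T := by
  have h1 : Submodule.span ℂ gens ≤ T.comap (f : F →ₗ[ℂ] F) :=
    Submodule.span_le.2 (fun z hz => h z hz)
  have h2 : f x ∈ closure (T : Set F) :=
    map_mem_closure f.continuous hx (fun y hy => h1 hy)
  rwa [hT.closure_eq] at h2

/-- For unitary constraints `C = U - 1` in a unital C*-algebra `F`, the observable algebra
`O = M_F(D)` satisfies `O = {A : U A U* - A ∈ D for all U ∈ U}`, and `U ⊆ O`. -/
theorem stmt_8 {F : Type*} [NormedRing F] [StarRing F] [CStarRing F]
    [NormedAlgebra ℂ F] [StarModule ℂ F] [CompleteSpace F]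
    (U : Set F) (hU : ∀ u ∈ U, star u * u = 1 ∧ u * star u = 1) :
    let C : Set F := {x : F | ∃ u ∈ U, x = u - 1}
    let N₁ : Set F := closure ((Submodule.span ℂ {x : F | ∃ a : F, ∃ c ∈ C, x = a * c} : Submodule ℂ F) : Set F)
    let N₂ : Set F := closure ((Submodule.span ℂ {x : F | ∃ a : F, ∃ c ∈ C, x = c * a} : Submodule ℂ F) : Set F)
    let D : Set F := N₁ ∩ N₂
    let O : Set F := {A : F | ∀ d ∈ D, A * d ∈ D ∧ d * A ∈ D}
    O = {A : F | ∀ u ∈ U, u * A * star u - A ∈ D} ∧ U ⊆ O := by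
  intro C N₁ N₂ D O
  -- submodules and closures
  set gens₁ : Set F := {x : F | ∃ a : F, ∃ c ∈ C, x = a * c} with hgens₁
  set gens₂ : Set F := {x : F | ∃ a : F, ∃ c ∈ C, x = c * a} with hgens₂
  set T₁ : Submodule ℂ F := (Submodule.span ℂ gens₁).topologicalClosure with hT₁
  set T₂ : Submodule ℂ F := (Submodule.span ℂ gens₂).topologicalClosure with hT₂
  have eN₁ : N₁ = (T₁ : Set F) := (Submodule.topologicalClosure_coe _).symm
  have eN₂ : N₂ = (T₂ : Set F) := (Submodule.topologicalClosure_coe _).symm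
  have hT₁c : IsClosed (T₁ : Set F) := by
    rw [Submodule.topologicalClosure_coe]; exact isClosed_closure
  have hT₂c : IsClosed (T₂ : Set F) := by
    rw [Submodule.topologicalClosure_coe]; exact isClosed_closure
  have mem₁ : ∀ x : F, x ∈ N₁ → x ∈ T₁ := fun x hx => hx
  have mem₂ : ∀ x : F, x ∈ N₂ → x ∈ T₂ := fun x hx => hx
  have mem₁' : ∀ x : F, x ∈ T₁ → x ∈ N₁ := fun x hx => hx
  have mem₂' : ∀ x : F, x ∈ T₂ → x ∈ N₂ := fun x hx => hx
  -- generator membership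
  have genN₁ : ∀ x c : F, c ∈ C → x * c ∈ N₁ := fun x c hc =>
    subset_closure (Submodule.subset_span ⟨x, c, hc, rfl⟩)
  have genN₂ : ∀ x c : F, c ∈ C → c * x ∈ N₂ := fun x c hc =>
    subset_closure (Submodule.subset_span ⟨x, c, hc, rfl⟩)
  have hCu : ∀ u ∈ U, (u - 1 : F) ∈ C := fun u hu => ⟨u, hu, rfl⟩
  -- star versions
  have hv₁' : ∀ u ∈ U, ∀ x : F, x * (star u - 1) ∈ N₁ := by
    intro u hu x
    have key : (-(star u)) * (u - 1) = star u - 1 := by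
      rw [neg_mul, mul_sub, (hU u hu).1, mul_one, neg_sub]
    have e : x * (star u - 1) = (x * (-star u)) * (u - 1) := by
      rw [mul_assoc, key]
    rw [e]; exact genN₁ _ _ (hCu u hu)
  have hv₂' : ∀ u ∈ U, ∀ x : F, (star u - 1) * x ∈ N₂ := by
    intro u hu x
    have key : (u - 1) * (-(star u)) = star u - 1 := by
      rw [mul_neg, sub_mul, (hU u hu).2, one_mul, neg_sub]
    have e : (star u - 1) * x = (u - 1) * ((-star u) * x) := by
      rw [← mul_assoc, key]
    rw [e]; exact genN₂ _ _ (hCu u hu)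
  -- D submodule facts
  have DsubN₁ : D ⊆ N₁ := Set.inter_subset_left
  have DsubN₂ : D ⊆ N₂ := Set.inter_subset_right
  have hDadd : ∀ x y : F, x ∈ D → y ∈ D → x + y ∈ D := by
    intro x y hx hy
    constructor
    · exact mem₁' _ (T₁.add_mem (mem₁ _ hx.1) (mem₁ _ hy.1))
    · exact mem₂' _ (T₂.add_mem (mem₂ _ hx.2) (mem₂ _ hy.2))
  have hDneg : ∀ x : F, x ∈ D → -x ∈ D := by
    intro x hx
    constructor
    · exact mem₁' _ (T₁.neg_mem (mem₁ _ hx.1))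
    · exact mem₂' _ (T₂.neg_mem (mem₂ _ hx.2))
  -- left multiplication preserves N₁, right multiplication preserves N₂
  have leftN₁ : ∀ a x : F, x ∈ N₁ → a * x ∈ N₁ := by
    intro a x hx
    refine mem₁' _ ?_
    have := stmt_8_aux T₁ hT₁c (ContinuousLinearMap.mul ℂ F a) gens₁
      (fun y hy => by
        obtain ⟨b, c, hc, rfl⟩ := hy
        have : a * (b * c) = (a * b) * c := (mul_assoc a b c).symm
        simp only [ContinuousLinearMap.mul_apply']
        rw [this]
        exact Submodule.le_topologicalClosure _ (Submodule.subset_span ⟨a * b, c, hc, rfl⟩))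
      hx
    simpa using this
  have rightN₂ : ∀ a x : F, x ∈ N₂ → x * a ∈ N₂ := by
    intro a x hx
    refine mem₂' _ ?_
    have := stmt_8_aux T₂ hT₂c ((ContinuousLinearMap.mul ℂ F).flip a) gens₂
      (fun y hy => by
        obtain ⟨b, c, hc, rfl⟩ := hy
        simp only [ContinuousLinearMap.flip_apply, ContinuousLinearMap.mul_apply']
        rw [mul_assoc]
        exact Submodule.le_topologicalClosure _ (Submodule.subset_span ⟨b * a, c, hc, rfl⟩))
      hx
    simpa using this
  -- elements v with these properties are in O
  have memO : ∀ v : F, (∀ x : F, x * (v - 1) ∈ N₁) → (∀ x : F, (v - 1) * x ∈ N₂) → v ∈ O := by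
    intro v h1 h2 d hd
    constructor
    · constructor
      · exact leftN₁ v d hd.1
      · have e : v * d = d + (v - 1) * d := by rw [sub_mul, one_mul]; abel
        rw [e]
        exact mem₂' _ (T₂.add_mem (mem₂ _ hd.2) (mem₂ _ (h2 d)))
    · constructor
      · have e : d * v = d + d * (v - 1) := by rw [mul_sub, mul_one]; abel
        rw [e]
        exact mem₁' _ (T₁.add_mem (mem₁ _ hd.1) (mem₁ _ (h1 d)))
      · exact rightN₂ v d hd.2
  have uO : ∀ u ∈ U, u ∈ O := fun u hu =>
    memO u (fun x => genN₁ x _ (hCu u hu)) (fun x => genN₂ x _ (hCu u hu))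
  have suO : ∀ u ∈ U, star u ∈ O := fun u hu =>
    memO (star u) (hv₁' u hu) (hv₂' u hu)
  have hu1D : ∀ u ∈ U, (u - 1 : F) ∈ D :=
    fun u hu => ⟨by simpa using genN₁ 1 _ (hCu u hu), by simpa using genN₂ 1 _ (hCu u hu)⟩
  have hsu1D : ∀ u ∈ U, (star u - 1 : F) ∈ D :=
    fun u hu => ⟨by simpa using hv₁' u hu 1, by simpa using hv₂' u hu 1⟩
  constructor
  · ext A
    simp only [Set.mem_setOf_eq]
    constructor
    · -- O ⊆ RHS
      intro hA u hu
      have e : u * A * star u - A = (u - 1) * A * star u + A * (star u - 1) := by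
        noncomm_ring
      rw [e]
      have h1 : (u - 1) * A ∈ D := (hA _ (hu1D u hu)).2
      have h2 : (u - 1) * A * star u ∈ D := (suO u hu _ h1).2
      have h3 : A * (star u - 1) ∈ D := (hA _ (hsu1D u hu)).1
      exact hDadd _ _ h2 h3
    · -- RHS ⊆ O
      intro hA d hd
      have comm : ∀ u ∈ U, u * A - A * u ∈ D := by
        intro u hu
        have h1 : (u * A * star u - A) * u ∈ D := (uO u hu _ (hA u hu)).2
        have e : (u * A * star u - A) * u = u * A - A * u := by
          rw [sub_mul, mul_assoc (u * A), (hU u hu).1, mul_one]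
        rwa [e] at h1
      constructor
      · -- A * d ∈ D
        refine ⟨leftN₁ A d hd.1, mem₂' _ ?_⟩
        exact stmt_8_aux T₂ hT₂c (ContinuousLinearMap.mul ℂ F A) gens₂
          (fun y hy => by
            obtain ⟨b, c, ⟨u, hu, rfl⟩, rfl⟩ := hy
            simp only [ContinuousLinearMap.mul_apply']
            have e : A * ((u - 1) * b) = (A * u - u * A) * b + (u - 1) * (A * b) := by
              noncomm_ring
            rw [e]
            refine T₂.add_mem ?_ ?_
            · have : A * u - u * A ∈ D := by
                have := hDneg _ (comm u hu); simpa using this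
              exact mem₂ _ (rightN₂ b _ (DsubN₂ this))
            · exact Submodule.le_topologicalClosure _
                (Submodule.subset_span ⟨A * b, u - 1, hCu u hu, rfl⟩))
          hd.2
      · -- d * A ∈ D
        refine ⟨mem₁' _ ?_, rightN₂ A d hd.2⟩
        exact stmt_8_aux T₁ hT₁c ((ContinuousLinearMap.mul ℂ F).flip A) gens₁
          (fun y hy => by
            obtain ⟨b, c, ⟨u, hu, rfl⟩, rfl⟩ := hy
            simp only [ContinuousLinearMap.flip_apply, ContinuousLinearMap.mul_apply']
            have e : (b * (u - 1)) * A = b * (u * A - A * u) + (b * A) * (u - 1) := by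
              noncomm_ring
            rw [e]
            refine T₁.add_mem ?_ ?_
            · exact mem₁ _ (leftN₁ b _ (DsubN₁ (comm u hu)))
            · exact Submodule.le_topologicalClosure _
                (Submodule.subset_span ⟨b * A, u - 1, hCu u hu, rfl⟩))
          hd.1
  · exact fun u hu => uO u hu
end

section
/- Every extreme point of the set of Dirac states is a pure state: if ω is a Dirac state for a first-class constraint set C in a unital C*-algebra F and ω is extreme among Dirac states, then ω is extreme among all states of F. -/
/-- An extreme Dirac state is pure: if `ω` is a Dirac state for a first-class self-adjoint
constraint set `C` in a unital C*-algebra `F` and `ω` is an extreme point of the set of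
Dirac states, then `ω` is an extreme point of the set of all states of `F`. -/
theorem stmt_9 {F : Type*} [NormedRing F] [StarRing F] [CStarRing F]
    [NormedAlgebra ℂ F] [StarModule ℂ F] [CompleteSpace F]
    (C : Set F) (hC : ∀ c ∈ C, star c ∈ C)
    (hfc : (1 : F) ∉ closure ((NonUnitalStarAlgebra.adjoin ℂ C : NonUnitalStarSubalgebra ℂ F) : Set F))
    (ω : F →ₗ[ℂ] ℂ) :
    let S : Set (F →ₗ[ℂ] ℂ) := {φ | IsState φ}
    let SD : Set (F →ₗ[ℂ] ℂ) := {φ | IsState φ ∧ ∀ c ∈ C, φ (star c * c) = 0}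
    ω ∈ SD.extremePoints ℝ → ω ∈ S.extremePoints ℝ := by
  intro S SD hω
  rw [mem_extremePoints] at hω ⊢
  obtain ⟨⟨hωS, hωC⟩, hext⟩ := hω
  refine ⟨hωS, ?_⟩
  intro φ hφ ψ hψ hseg
  obtain ⟨a, b, ha, hb, hab, hsum⟩ := hseg
  have key : ∀ c ∈ C, φ (star c * c) = 0 ∧ ψ (star c * c) = 0 := by
    intro c hc
    obtain ⟨r, hr, hrφ⟩ := hφ.2 c
    obtain ⟨s, hs, hsψ⟩ := hψ.2 c
    have h0 : a • φ (star c * c) + b • ψ (star c * c) = 0 := by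
      have := hωC c hc
      rw [← hsum] at this
      simpa using this
    rw [hrφ, hsψ] at h0
    have h0' : ((a * r + b * s : ℝ) : ℂ) = 0 := by push_cast; simpa using h0
    have h0'' : a * r + b * s = 0 := by exact_mod_cast h0'
    have hr0 : r = 0 := by nlinarith [mul_nonneg hb.le hs, mul_nonneg ha.le hr]
    have hs0 : s = 0 := by nlinarith [mul_nonneg ha.le hr]
    constructor
    · rw [hrφ, hr0]; norm_num
    · rw [hsψ, hs0]; norm_num
  have hφD : φ ∈ SD := ⟨hφ, fun c hc => (key c hc).1⟩
  have hψD : ψ ∈ SD := ⟨hψ, fun c hc => (key c hc).2⟩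
  exact hext φ hφD ψ hψD ⟨a, b, ha, hb, hab, hsum⟩
end

section
/- Given a unitary constraint set U in a unital C*-algebra F, the maximal set of unitaries U_m equivalent to U (i.e. selecting the same Dirac states) is a group under multiplication: it contains inverses and products of its elements. -/
open Complex

set_option linter.unusedSectionVars false

section Aux
variable {F : Type*} [NormedRing F] [StarRing F] [NormedAlgebra ℂ F] [StarModule ℂ F]
variable {ω : F →ₗ[ℂ] ℂ}

lemma expand_aux (ω : F →ₗ[ℂ] ℂ) (a b : F) (c : ℂ) :
    ω (star (a + c • b) * (a + c • b)) =
      ω (star a * a) + (starRingEnd ℂ) c * ω (star b * a) + c * ω (star a * b)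
        + c * (starRingEnd ℂ) c * ω (star b * b) := by
  have h : star (a + c • b) * (a + c • b)
      = star a * a + ((starRingEnd ℂ) c) • (star b * a) + c • (star a * b)
        + (c * (starRingEnd ℂ) c) • (star b * b) := by
    rw [star_add, star_smul]
    simp only [add_mul, mul_add, smul_add, smul_mul_assoc, mul_smul_comm, smul_smul,
      starRingEnd_apply]
    abel_nf
  rw [h]
  simp [mul_comm]

lemma real_aux (hω : IsState ω) (x : F) :
    (ω (star x * x)).im = 0 ∧ 0 ≤ (ω (star x * x)).re := by
  obtain ⟨r, hr, h⟩ := hω.2 x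
  rw [h]; simp [hr]

/-- Hermitian symmetry. -/
lemma herm_aux (hω : IsState ω) (a b : F) :
    ω (star a * b) = (starRingEnd ℂ) (ω (star b * a)) := by
  have h1 := (real_aux hω (a + (1:ℂ) • b)).1
  have h2 := (real_aux hω (a + (I:ℂ) • b)).1
  rw [expand_aux] at h1 h2
  have ha := (real_aux hω a).1
  have hb := (real_aux hω b).1
  simp only [map_one, one_mul, conj_I] at h1 h2
  simp only [add_im, mul_im, neg_mul, neg_im, neg_re, mul_re, I_re, I_im, one_mul, zero_mul,
    mul_one, mul_zero, zero_sub, zero_add, add_zero] at h1 h2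
  apply Complex.ext
  · simp only [conj_re]; nlinarith [h2, ha, hb]
  · simp only [conj_im]; nlinarith [h1, ha, hb]

/-- degenerate Cauchy-Schwarz -/
lemma cs_aux (hω : IsState ω) (a b : F) (hb : ω (star b * b) = 0) :
    ω (star b * a) = 0 := by
  have key : ∀ b' : F, ω (star b' * b') = 0 → (ω (star b' * a)).re = 0 := by
    intro b' hb'
    by_contra hre
    set β := (ω (star b' * a)).re with hβ
    set α := (ω (star a * a)).re with hα
    have hc : ∀ t : ℝ, 0 ≤ α + 2 * t * β := by
      intro t
      have h := (real_aux hω (a + (t:ℂ) • b')).2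
      rw [expand_aux] at h
      have hherm := herm_aux hω a b'
      rw [hb', hherm] at h
      simp only [mul_zero, add_zero, Complex.conj_ofReal] at h
      convert h using 1
      simp [Complex.add_re, Complex.mul_re, Complex.ofReal_re, Complex.ofReal_im,
        Complex.conj_re, Complex.conj_im]
      noncomm_ring
    have h1 := hc ((-α - 1) / (2 * β))
    have h2β : (2:ℝ) * β ≠ 0 := by
      intro h; apply hre; linarith [h]
    have heq : 2 * ((-α - 1) / (2 * β)) * β = -α - 1 := by
      field_simp
    rw [heq] at h1
    linarith
  have hre : (ω (star b * a)).re = 0 := key b hb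
  have hbI : ω (star ((I:ℂ) • b) * ((I:ℂ) • b)) = 0 := by
    rw [star_smul, smul_mul_assoc, mul_smul_comm]
    simp [hb]
  have him := key ((I:ℂ) • b) hbI
  rw [star_smul, smul_mul_assoc, map_smul] at him
  rw [Complex.star_def, conj_I] at him
  rw [smul_eq_mul] at him
  have : ((-I) * ω (star b * a)).re = 0 := him
  simp only [neg_mul, neg_re, mul_re, I_re, I_im, zero_mul, one_mul, zero_sub, neg_neg] at this
  apply Complex.ext <;> simp [hre, this]

/-- shift: if ω(U) = 1 and U unitary, then ω(U * a) = ω(a). -/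
lemma shift_aux (hω : IsState ω) (u : F) (hu : star u * u = 1 ∧ u * star u = 1)
    (h1 : ω u = 1) (a : F) : ω (u * a) = ω a := by
  have hstar : ω (star u) = 1 := by
    have := herm_aux hω 1 u
    simp only [star_one, one_mul, mul_one, h1, map_one] at this
    have h2 := congrArg (starRingEnd ℂ) this
    simpa using h2.symm
  have hb0 : ω (star (star u - 1) * (star u - 1)) = 0 := by
    have hexp : star (star u - 1) * (star u - 1) = u * star u - u - star u + 1 := by
      rw [star_sub, star_star, star_one]
      noncomm_ring
    rw [hexp]
    simp only [map_add, map_sub]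
    rw [hu.2, hω.1, h1, hstar]
    ring
  have := cs_aux hω a (star u - 1) hb0
  rw [star_sub, star_star, star_one, sub_mul, one_mul, map_sub] at this
  linear_combination this

end Aux

/-- Given a unitary constraint set `U` in a unital C*-algebra `F` with a nonempty set of
Dirac states `S_D = {ω : ω U = 1 ∀ U ∈ U}`, the maximal equivalent set of unitaries
`U_m = {V unitary : ω V = 1 ∀ ω ∈ S_D}` is a group: it is closed under inverses
(adjoints) and products. -/
theorem stmt_11 {F : Type*} [NormedRing F] [StarRing F] [CStarRing F]
    [NormedAlgebra ℂ F] [StarModule ℂ F] [CompleteSpace F]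
    (U : Set F) (hU : ∀ u ∈ U, star u * u = 1 ∧ u * star u = 1)
    (hne : ∃ ω : F →ₗ[ℂ] ℂ, IsState ω ∧ ∀ u ∈ U, ω u = 1) :
    let SD : Set (F →ₗ[ℂ] ℂ) := {ω | IsState ω ∧ ∀ u ∈ U, ω u = 1}
    let Um : Set F := {V | (star V * V = 1 ∧ V * star V = 1) ∧ ∀ ω ∈ SD, ω V = 1}
    (1 : F) ∈ Um ∧ (∀ V ∈ Um, star V ∈ Um) ∧ (∀ V ∈ Um, ∀ W ∈ Um, V * W ∈ Um) := by
  intro SD Um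
  refine ⟨⟨⟨by simp, by simp⟩, fun ω hω => hω.1.1⟩, ?_, ?_⟩
  · rintro V ⟨⟨hV1, hV2⟩, hVω⟩
    refine ⟨⟨by rwa [star_star], by rwa [star_star]⟩, fun ω hω => ?_⟩
    have h1 : ω V = 1 := hVω ω hω
    have := herm_aux hω.1 1 V
    simp only [star_one, one_mul, mul_one, h1, map_one] at this
    have h2 := congrArg (starRingEnd ℂ) this
    simpa using h2.symm
  · rintro V ⟨⟨hV1, hV2⟩, hVω⟩ W ⟨⟨hW1, hW2⟩, hWω⟩
    refine ⟨⟨?_, ?_⟩, fun ω hω => ?_⟩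
    · rw [star_mul]
      calc star W * star V * (V * W) = star W * (star V * V) * W := by noncomm_ring
        _ = 1 := by rw [hV1]; simpa using hW1
    · rw [star_mul]
      calc V * W * (star W * star V) = V * (W * star W) * star V := by noncomm_ring
        _ = 1 := by rw [hW2]; simpa using hV2
    · rw [shift_aux hω.1 V ⟨hV1, hV2⟩ (hVω ω hω) W]
      exact hWω ω hω
end

section
/- Let F be a unital C*-algebra and D ∈ F a positive element. A state ω on F satisfies ω(exp(itD)) = 1 for all t ∈ ℝ if and only if ω(D) = 0. Consequently every first-class constraint system is equivalent to one given by unitary constraints {exp(itD) : t ∈ ℝ, D ∈ D₊}. -/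
open scoped ComplexOrder
open NormedSpace

theorem ContinuousLinearMap.apply_eq_zero_of_mem_closure_span {𝕜 E G : Type*} [Semiring 𝕜]
    [AddCommMonoid E] [Module 𝕜 E] [TopologicalSpace E] [AddCommMonoid G] [Module 𝕜 G]
    [TopologicalSpace G] [T1Space G] (φ : E →L[𝕜] G) {s : Set E} (hs : ∀ x ∈ s, φ x = 0)
    {x : E} (hx : x ∈ closure (Submodule.span 𝕜 s : Set E)) : φ x = 0 := by
  have hspan : Submodule.span 𝕜 s ≤ (φ : E →ₗ[𝕜] G).ker := Submodule.span_le.mpr hs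
  exact closure_minimal hspan φ.isClosed_ker hx

theorem ContinuousLinearMap.apply_eq_zero_of_apply_exp_smul_eq {𝔸 E : Type*} [NormedRing 𝔸]
    [NormedAlgebra ℝ 𝔸] [CompleteSpace 𝔸] [NormedAddCommGroup E] [NormedSpace ℝ E]
    (φ : 𝔸 →L[ℝ] E) (x : 𝔸) (h : ∀ t : ℝ, φ (exp (t • x)) = φ 1) : φ x = 0 := by
  have hderiv : HasDerivAt (fun t : ℝ => φ (exp (t • x))) (φ x) 0 := by
    simpa [Function.comp_def] using
      φ.hasFDerivAt.comp_hasDerivAt 0 (hasDerivAt_exp_smul_const x (0 : ℝ))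
  simp only [h] at hderiv
  exact hderiv.unique (hasDerivAt_const 0 _)

namespace PositiveLinearMap

variable {A : Type*} [CStarAlgebra A] [PartialOrder A] [StarOrderedRing A] (f : A →ₚ[ℂ] ℂ)

noncomputable def toContinuousLinearMap : A →L[ℂ] ℂ :=
  ⟨f, map_continuous f⟩

@[simp]
theorem toContinuousLinearMap_apply (x : A) : f.toContinuousLinearMap x = f x :=
  rfl

-- Cauchy–Schwarz in the GNS space of `f`: `x` has seminorm `0` there.
theorem apply_star_mul_eq_zero {x : A} (hx : f (star x * x) = 0) (y : A) :
    f (star x * y) = 0 :=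
  inner_eq_zero_of_left (𝕜 := ℂ) (f.toPreGNS y) (x := f.toPreGNS x)
    (by simpa [hx] using f.preGNS_norm_sq (f.toPreGNS x))

theorem apply_mul_eq_zero {x : A} (hx : f (star x * x) = 0) (y : A) : f (y * x) = 0 := by
  simpa [← map_star f] using congrArg star (f.apply_star_mul_eq_zero hx (star y))

theorem apply_pow_eq_zero_of_nonneg {D : A} (hD : 0 ≤ D) (h : f D = 0) {n : ℕ} (hn : n ≠ 0) :
    f (D ^ n) = 0 := by
  obtain ⟨s, rfl⟩ := CStarAlgebra.nonneg_iff_eq_star_mul_self.mp hD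
  obtain ⟨m, rfl⟩ := Nat.exists_eq_succ_of_ne_zero hn
  rw [pow_succ', mul_assoc]
  exact f.apply_star_mul_eq_zero h _

theorem apply_exp_smul_of_nonneg {D : A} (hD : 0 ≤ D) (h : f D = 0) (z : ℂ) :
    f (exp (z • D)) = f 1 := by
  rw [exp_eq_tsum ℂ, (expSeries_summable' (z • D)).map_tsum f (map_continuous f),
    tsum_eq_single 0 fun n hn => by simp [smul_pow, f.apply_pow_eq_zero_of_nonneg hD h hn]]
  simp

theorem apply_exp_smul_I_eq_apply_one_iff {D : A} (hD : 0 ≤ D) :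
    (∀ t : ℝ, f (exp (((t : ℂ) * Complex.I) • D)) = f 1) ↔ f D = 0 := by
  refine ⟨fun h => ?_, fun h t => f.apply_exp_smul_of_nonneg hD h _⟩
  have : f (Complex.I • D) = 0 :=
    (f.toContinuousLinearMap.restrictScalars ℝ).apply_eq_zero_of_apply_exp_smul_eq _ fun t => by
      simpa [← Complex.coe_smul, smul_smul] using h t
  simpa using this

end PositiveLinearMap

section State

variable {A : Type*} [CStarAlgebra A] [PartialOrder A] [StarOrderedRing A] {ω : A →ₗ[ℂ] ℂ}

theorem IsState.map_nonneg (hω : IsState ω) {x : A} (hx : 0 ≤ x) : 0 ≤ ω x := by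
  obtain ⟨s, rfl⟩ := CStarAlgebra.nonneg_iff_eq_star_mul_self.mp hx
  obtain ⟨r, hr, hωs⟩ := hω.2 s
  rw [hωs]
  exact_mod_cast hr

noncomputable def IsState.toPositiveLinearMap (hω : IsState ω) : A →ₚ[ℂ] ℂ :=
  .mk₀ ω fun _ => hω.map_nonneg

@[simp]
theorem IsState.toPositiveLinearMap_apply (hω : IsState ω) (x : A) :
    hω.toPositiveLinearMap x = ω x :=
  rfl

end State

/-- In a unital C*-algebra `F`: (a) for every positive `D ∈ F` and every state `ω`,
`ω (exp (i t D)) = 1` for all `t ∈ ℝ` iff `ω D = 0`.  (b) Consequently, every first-class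
constraint system `(F, C)` is equivalent to the unitary constraint system
`{exp (i t D) : t ∈ ℝ, D ∈ D₊}`: a state is a Dirac state for `C` iff it takes the value
`1` on all these unitaries. -/
theorem stmt_13 {F : Type*} [NormedRing F] [StarRing F] [CStarRing F]
    [NormedAlgebra ℂ F] [StarModule ℂ F] [CompleteSpace F]
    [PartialOrder F] [StarOrderedRing F]
    (C : Set F) (hC : ∀ c ∈ C, star c ∈ C) :
    let Dset : Set F :=
      closure ((Submodule.span ℂ {x : F | ∃ a : F, ∃ c ∈ C, x = a * c} : Submodule ℂ F) : Set F) ∩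
      closure ((Submodule.span ℂ {x : F | ∃ a : F, ∃ c ∈ C, x = c * a} : Submodule ℂ F) : Set F)
    (∀ ω : F →ₗ[ℂ] ℂ, IsState ω → ∀ D : F, 0 ≤ D →
      ((∀ t : ℝ, ω (NormedSpace.exp (((t : ℂ) * Complex.I) • D)) = 1) ↔ ω D = 0)) ∧
    (∀ ω : F →ₗ[ℂ] ℂ, IsState ω →
      ((∀ c ∈ C, ω (star c * c) = 0) ↔
        ∀ D ∈ Dset, 0 ≤ D → ∀ t : ℝ, ω (NormedSpace.exp (((t : ℂ) * Complex.I) • D)) = 1)) := by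
  let _ : CStarAlgebra F := {}
  intro Dset
  have exp_iff (ω : F →ₗ[ℂ] ℂ) (hω : IsState ω) (D : F) (hD : 0 ≤ D) :
      (∀ t : ℝ, ω (exp (((t : ℂ) * Complex.I) • D)) = 1) ↔ ω D = 0 := by
    simpa [hω.1] using hω.toPositiveLinearMap.apply_exp_smul_I_eq_apply_one_iff hD
  refine ⟨exp_iff, fun ω hω => ⟨fun hdirac D hD hD_nonneg => ?_, fun hunitary c hc => ?_⟩⟩
  · have hgen : ∀ x ∈ {x : F | ∃ a : F, ∃ c ∈ C, x = a * c}, ω x = 0 := by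
      rintro _ ⟨a, c, hc, rfl⟩
      simpa using hω.toPositiveLinearMap.apply_mul_eq_zero (by simpa using hdirac c hc) a
    have hωD : ω D = 0 :=
      hω.toPositiveLinearMap.toContinuousLinearMap.apply_eq_zero_of_mem_closure_span hgen hD.1
    exact (exp_iff ω hω D hD_nonneg).2 hωD
  · have hmem : star c * c ∈ Dset :=
      ⟨subset_closure (Submodule.subset_span ⟨star c, c, hc, rfl⟩),
        subset_closure (Submodule.subset_span ⟨c, star c, hC c hc, rfl⟩)⟩
    have hnonneg := star_mul_self_nonneg c
    exact (exp_iff ω hω _ hnonneg).1 (hunitary _ hmem hnonneg)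
end

section
/- In the CCR algebra over a symplectic space (X, B), the central state ω₀ defined by ω₀(δ_f) = 1 if f = 0 and 0 otherwise satisfies ω₀(F*F)^{1/2} = (Σ|λ_i|²)^{1/2} ≤ ‖F‖ ≤ Σ|λ_i| for F = Σ λ_i δ_{f_i} with distinct f_i; in particular ω₀ is a state and the δ_f are linearly independent. -/
/-! The CCR (Weyl) *-algebra `Δ(X, B)`: finitely supported complex functions on `X` with
basis `δ_f = single f 1`, twisted product and involution, and its central state. -/

/-- Twisted (Weyl) product on `Δ(X,B)`: `δ_f ⬝ δ_h = e^{(i/2) B(f,h)} δ_{f+h}`. -/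
noncomputable def weylMul {X : Type*} [AddCommGroup X] (B : X → X → ℝ)
    (a b : X →₀ ℂ) : X →₀ ℂ :=
  a.sum fun f c => b.sum fun g d =>
    Finsupp.single (f + g) (c * d * Complex.exp (Complex.I * (B f g : ℂ) / 2))

/-- Involution on `Δ(X,B)`: `(δ_f)* = δ_{-f}` (antilinearly extended). -/
noncomputable def weylStar {X : Type*} [AddCommGroup X] (a : X →₀ ℂ) : X →₀ ℂ :=
  a.sum fun f c => Finsupp.single (-f) (starRingEnd ℂ c)

/-- The ℓ¹ norm `‖Σ λᵢ δ_{fᵢ}‖₁ = Σ |λᵢ|`. -/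
noncomputable def l1Norm {X : Type*} (a : X →₀ ℂ) : ℝ := a.sum fun _ c => ‖c‖

/-- The ℓ² norm `(Σ |λᵢ|²)^{1/2}`. -/
noncomputable def l2Norm {X : Type*} (a : X →₀ ℂ) : ℝ :=
  Real.sqrt (a.sum fun _ c => Complex.normSq c)

/-- A state on `Δ₁(X,B)`: normalized (`ω δ₀ = 1`), positive for the twisted product, and
ℓ¹-contractive. -/
def IsStateW {X : Type*} [AddCommGroup X] (B : X → X → ℝ)
    (ω : (X →₀ ℂ) →ₗ[ℂ] ℂ) : Prop :=
  ω (Finsupp.single 0 1) = 1 ∧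
  (∀ a : X →₀ ℂ, ∃ r : ℝ, 0 ≤ r ∧ ω (weylMul B (weylStar a) a) = (r : ℂ)) ∧
  ∀ a : X →₀ ℂ, ‖ω a‖ ≤ l1Norm a

/-- The enveloping C*-(semi)norm: `‖a‖ = sup_ω √(ω(a* a))` over the states of `Δ₁(X,B)`. -/
noncomputable def envNorm {X : Type*} [AddCommGroup X] (B : X → X → ℝ)
    (a : X →₀ ℂ) : ℝ :=
  sSup {r : ℝ | ∃ ω : (X →₀ ℂ) →ₗ[ℂ] ℂ, IsStateW B ω ∧
    r = Real.sqrt (ω (weylMul B (weylStar a) a)).re}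

/-! The central state `ω₀` is evaluation of the coefficient of `δ₀`. In `F* F` the coefficient
of `δ₀` collects the products `conj λᵢ · λᵢ` with phase `e^{(i/2) B(-fᵢ, fᵢ)} = 1`, so
`ω₀(F* F) = Σ |λᵢ|²` and in particular `ω₀` is positive. Conversely every state is
`ℓ¹`-contractive, and the `ℓ¹` norm is submultiplicative for the twisted product and does not
grow under the involution, so `ω(F* F) ≤ ‖F‖₁²` for every state `ω`; this bounds the
enveloping norm by `ℓ¹`, while `ω₀` itself witnesses the `ℓ²` lower bound. -/

section WeylAlgebra

variable {X : Type*} [AddCommGroup X]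

theorem weylStar_apply (a : X →₀ ℂ) (g : X) : weylStar a g = starRingEnd ℂ (a (-g)) := by
  classical
  rw [weylStar, Finsupp.sum_apply]
  simp only [Finsupp.single_apply, neg_eq_iff_eq_neg, Finsupp.sum]
  rw [Finset.sum_ite_eq' a.support (-g)]
  split_ifs with h
  · rfl
  · simp [Finsupp.notMem_support_iff.mp h]

theorem support_weylStar (a : X →₀ ℂ) :
    (weylStar a).support = a.support.map (Equiv.neg X) := by
  ext f
  simp [weylStar_apply]

theorem weylMul_apply (B : X → X → ℝ) (a b : X →₀ ℂ) (t : X) :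
    weylMul B a b t =
      ∑ f ∈ a.support, a f * b (t - f) * Complex.exp (Complex.I * (B f (t - f) : ℂ) / 2) := by
  classical
  rw [weylMul, Finsupp.sum_apply, Finsupp.sum]
  refine Finset.sum_congr rfl fun f _ => ?_
  rw [Finsupp.sum_apply, Finsupp.sum]
  simp only [Finsupp.single_apply, ← eq_sub_iff_add_eq']
  rw [Finset.sum_ite_eq' b.support (t - f)]
  split_ifs with h
  · rfl
  · simp [Finsupp.notMem_support_iff.mp h]

theorem apply_neg_self_eq_zero {B : X → X → ℝ} (hBalt : ∀ f g : X, B f g = - B g f)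
    (hBadd : ∀ f g h : X, B (f + g) h = B f h + B g h) (f : X) : B (-f) f = 0 := by
  have hzero : B 0 f = 0 := by have := hBadd 0 0 f; rw [zero_add] at this; linarith
  have hdiag : B f f = 0 := by linarith [hBalt f f]
  have hsplit := hBadd (-f) f f
  rw [neg_add_cancel] at hsplit
  linarith

theorem weylMul_weylStar_self_apply_zero {B : X → X → ℝ}
    (hBalt : ∀ f g : X, B f g = - B g f)
    (hBadd : ∀ f g h : X, B (f + g) h = B f h + B g h) (a : X →₀ ℂ) :
    weylMul B (weylStar a) a 0 = ((a.sum fun _ c => Complex.normSq c : ℝ) : ℂ) := by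
  rw [weylMul_apply, support_weylStar, Finset.sum_map, Finsupp.sum, Complex.ofReal_sum]
  refine Finset.sum_congr rfl fun g _ => ?_
  simp [weylStar_apply, apply_neg_self_eq_zero hBalt hBadd, Complex.normSq_eq_conj_mul_self]

end WeylAlgebra

section L1Norm

variable {X : Type*}

theorem l1Norm_eq_sum_of_support_subset (a : X →₀ ℂ) {s : Finset X} (h : a.support ⊆ s) :
    l1Norm a = ∑ f ∈ s, ‖a f‖ :=
  Finsupp.sum_of_support_subset a h _ (by simp)

theorem l1Norm_nonneg (a : X →₀ ℂ) : 0 ≤ l1Norm a :=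
  Finset.sum_nonneg fun _ _ => norm_nonneg _

theorem norm_apply_le_l1Norm (a : X →₀ ℂ) (t : X) : ‖a t‖ ≤ l1Norm a := by
  by_cases h : t ∈ a.support
  · exact Finset.single_le_sum (f := fun f => ‖a f‖) (fun _ _ => norm_nonneg _) h
  · simp [Finsupp.notMem_support_iff.mp h, l1Norm_nonneg]

theorem l1Norm_single (f : X) (c : ℂ) : l1Norm (Finsupp.single f c) = ‖c‖ := by
  simp [l1Norm, Finsupp.sum_single_index]

theorem l1Norm_add_le [DecidableEq X] (a b : X →₀ ℂ) :
    l1Norm (a + b) ≤ l1Norm a + l1Norm b := by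
  rw [l1Norm_eq_sum_of_support_subset (a + b) Finsupp.support_add,
    l1Norm_eq_sum_of_support_subset a Finset.subset_union_left,
    l1Norm_eq_sum_of_support_subset b Finset.subset_union_right, ← Finset.sum_add_distrib]
  exact Finset.sum_le_sum fun f _ => norm_add_le (a f) (b f)

theorem l1Norm_sum_le {ι : Type*} (s : Finset ι) (g : ι → X →₀ ℂ) :
    l1Norm (∑ i ∈ s, g i) ≤ ∑ i ∈ s, l1Norm (g i) := by
  classical
  exact Finset.le_sum_of_subadditive l1Norm (by simp [l1Norm]) l1Norm_add_le s g

theorem l1Norm_weylMul_le [AddCommGroup X] (B : X → X → ℝ) (a b : X →₀ ℂ) :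
    l1Norm (weylMul B a b) ≤ l1Norm a * l1Norm b := by
  rw [weylMul, Finsupp.sum, l1Norm_eq_sum_of_support_subset a subset_rfl,
    l1Norm_eq_sum_of_support_subset b subset_rfl,
    Finset.sum_mul_sum]
  refine (l1Norm_sum_le _ _).trans <| Finset.sum_le_sum fun f _ => ?_
  rw [Finsupp.sum]
  refine (l1Norm_sum_le _ _).trans <| Finset.sum_le_sum fun g _ => ?_
  rw [l1Norm_single]
  simp [Complex.norm_exp]

theorem l1Norm_weylStar_le [AddCommGroup X] (a : X →₀ ℂ) :
    l1Norm (weylStar a) ≤ l1Norm a := by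
  rw [weylStar, Finsupp.sum, l1Norm_eq_sum_of_support_subset a subset_rfl]
  refine (l1Norm_sum_le _ _).trans <| Finset.sum_le_sum fun f _ => ?_
  rw [l1Norm_single, Complex.norm_conj]

end L1Norm

section States

variable {X : Type*} [AddCommGroup X] {B : X → X → ℝ}

theorem IsStateW.sqrt_re_le_l1Norm {ω : (X →₀ ℂ) →ₗ[ℂ] ℂ} (hω : IsStateW B ω)
    (a : X →₀ ℂ) :
    Real.sqrt (ω (weylMul B (weylStar a) a)).re ≤ l1Norm a := by
  refine Real.sqrt_le_iff.mpr ⟨l1Norm_nonneg a, ?_⟩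
  calc (ω (weylMul B (weylStar a) a)).re
      ≤ l1Norm (weylMul B (weylStar a) a) := (Complex.re_le_norm _).trans (hω.2.2 _)
    _ ≤ l1Norm (weylStar a) * l1Norm a := l1Norm_weylMul_le B _ _
    _ ≤ l1Norm a ^ 2 := by
      rw [sq]; exact mul_le_mul_of_nonneg_right (l1Norm_weylStar_le a) (l1Norm_nonneg a)

theorem envNorm_le_l1Norm (a : X →₀ ℂ) : envNorm B a ≤ l1Norm a :=
  Real.sSup_le (by rintro r ⟨ω, hω, rfl⟩; exact hω.sqrt_re_le_l1Norm a) (l1Norm_nonneg a)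

theorem IsStateW.sqrt_re_le_envNorm {ω : (X →₀ ℂ) →ₗ[ℂ] ℂ} (hω : IsStateW B ω)
    (a : X →₀ ℂ) : Real.sqrt (ω (weylMul B (weylStar a) a)).re ≤ envNorm B a :=
  le_csSup ⟨l1Norm a, by rintro r ⟨ω', hω', rfl⟩; exact hω'.sqrt_re_le_l1Norm a⟩
    ⟨ω, hω, rfl⟩

end States

section CentralState

variable {X : Type*} [AddCommGroup X] {B : X → X → ℝ}

noncomputable def centralState : (X →₀ ℂ) →ₗ[ℂ] ℂ := Finsupp.lapply 0

theorem centralState_apply (a : X →₀ ℂ) : centralState a = a 0 := rfl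

theorem centralState_weylMul_weylStar_self (hBalt : ∀ f g : X, B f g = - B g f)
    (hBadd : ∀ f g h : X, B (f + g) h = B f h + B g h) (a : X →₀ ℂ) :
    centralState (weylMul B (weylStar a) a) = ((a.sum fun _ c => Complex.normSq c : ℝ) : ℂ) :=
  weylMul_weylStar_self_apply_zero hBalt hBadd a

theorem sqrt_re_centralState_weylMul_weylStar_self (hBalt : ∀ f g : X, B f g = - B g f)
    (hBadd : ∀ f g h : X, B (f + g) h = B f h + B g h) (a : X →₀ ℂ) :
    Real.sqrt (centralState (weylMul B (weylStar a) a)).re = l2Norm a := by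
  rw [centralState_weylMul_weylStar_self hBalt hBadd, Complex.ofReal_re, l2Norm]

theorem isStateW_centralState (hBalt : ∀ f g : X, B f g = - B g f)
    (hBadd : ∀ f g h : X, B (f + g) h = B f h + B g h) : IsStateW B centralState := by
  refine ⟨by simp [centralState_apply], fun a => ⟨_, ?_, centralState_weylMul_weylStar_self
    hBalt hBadd a⟩, fun a => norm_apply_le_l1Norm a 0⟩
  exact Finset.sum_nonneg fun _ _ => Complex.normSq_nonneg _

end CentralState

/-- In the CCR algebra over a symplectic space `(X,B)` the central state
`ω₀ (δ_f) = [f = 0]` is a state, it satisfies `ω₀(F* F)^{1/2} = (Σ |λᵢ|²)^{1/2}` for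
`F = Σ λᵢ δ_{fᵢ}` (distinct `fᵢ`), one has `ℓ² ≤ ‖·‖ ≤ ℓ¹` for the enveloping C*-norm,
and the `δ_f` are linearly independent. -/
theorem stmt_16 {X : Type*} [AddCommGroup X] [DecidableEq X] (B : X → X → ℝ)
    (hBalt : ∀ f g : X, B f g = - B g f)
    (hBadd : ∀ f g h : X, B (f + g) h = B f h + B g h) :
    ∃ ω₀ : (X →₀ ℂ) →ₗ[ℂ] ℂ,
      IsStateW B ω₀ ∧
      (∀ f : X, ω₀ (Finsupp.single f 1) = if f = 0 then 1 else 0) ∧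
      (∀ a : X →₀ ℂ, Real.sqrt (ω₀ (weylMul B (weylStar a) a)).re = l2Norm a) ∧
      (∀ a : X →₀ ℂ, l2Norm a ≤ envNorm B a ∧ envNorm B a ≤ l1Norm a) ∧
      LinearIndependent ℂ (fun f : X => (Finsupp.single f 1 : X →₀ ℂ)) := by
  have hstate := isStateW_centralState hBalt hBadd
  have hl2 := sqrt_re_centralState_weylMul_weylStar_self hBalt hBadd
  refine ⟨centralState, hstate, fun f => Finsupp.single_apply, hl2,
    fun a => ⟨?_, envNorm_le_l1Norm a⟩, Finsupp.basisSingleOne.linearIndependent⟩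
  rw [← hl2 a]
  exact hstate.sqrt_re_le_envNorm a
end

section
/- Let (X, B) be a symplectic space (possibly degenerate) and s ⊆ X a subspace. The unitary constraint set {δ_f : f ∈ s} in the CCR algebra over (X,B) is first class (admits a Dirac state) if s is contained in its symplectic commutant s' = {f ∈ X : B(f, s) = 0}; indeed the central state ω₀ is then a Dirac state, since ω₀((δ_f - 1)*(δ_f - 1)) = 0 for f ∈ s requires B(f,g)-commutation relations to give δ_f central on the relevant subalgebra. -/
open Finsupp ComplexConjugate

theorem weylMul_weylStar_self {X : Type*} [AddCommGroup X] (B : X → X → ℝ) (a : X →₀ ℂ) :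
    weylMul B (weylStar a) a = a.sum fun f c => a.sum fun g d =>
      single (g - f) (conj c * d * Complex.exp (Complex.I * (B (-f) g : ℂ) / 2)) := by
  rw [weylMul, weylStar, sum_sum_index]
  · refine sum_congr fun f _ => ?_
    rw [sum_single_index]
    · simp only [neg_add_eq_sub]
    · simp [Finsupp.sum]
  · intro k
    simp [Finsupp.sum]
  · intro k b₁ b₂
    simp [Finsupp.sum, add_mul, single_add, Finset.sum_add_distrib]

theorem sum_sum_conj_mul_ite_eq_sum_normSq {ι Q : Type*} [DecidableEq Q] (A : Finset ι)
    (π : ι → Q) (b : ι → ℂ) :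
    ∑ i ∈ A, ∑ j ∈ A, conj (b i) * b j * (if π j = π i then 1 else 0)
      = ∑ q ∈ A.image π, ((Complex.normSq (∑ i ∈ A with π i = q, b i) : ℝ) : ℂ) := by
  set T : Q → ℂ := fun q => ∑ i ∈ A with π i = q, b i
  have inner_sum : ∀ i, ∑ j ∈ A, conj (b i) * b j * (if π j = π i then 1 else 0)
      = conj (b i) * T (π i) := by
    intro i
    simp only [T, Finset.sum_filter, Finset.mul_sum]
    exact Finset.sum_congr rfl fun j _ => by split_ifs <;> ring
  simp only [inner_sum]
  rw [← Finset.sum_fiberwise_of_maps_to fun i hi => Finset.mem_image_of_mem π hi]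
  refine Finset.sum_congr rfl fun q _ => ?_
  rw [Finset.sum_congr rfl fun i hi => by rw [(Finset.mem_filter.mp hi).2], ← Finset.sum_mul,
    ← map_sum, mul_comm, Complex.mul_conj]

section Symplectic

variable {X : Type*} [AddCommGroup X] {B : X → X → ℝ}

theorem neg_left_of_add_left (hBadd : ∀ f g h : X, B (f + g) h = B f h + B g h) (f g : X) :
    B (-f) g = -B f g := by
  have h₀ := hBadd 0 0 g
  have h₁ := hBadd f (-f) g
  rw [add_zero] at h₀
  rw [add_neg_cancel] at h₁
  linarith

theorem neg_left_eq_sub_of_isotropic (hBalt : ∀ f g : X, B f g = -B g f)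
    (hBadd : ∀ f g h : X, B (f + g) h = B f h + B g h) {s : AddSubgroup X}
    (hs : ∀ f ∈ s, ∀ g ∈ s, B f g = 0) {f g x : X} (hf : f - x ∈ s) (hg : g - x ∈ s) :
    B (-f) g = B (g - x) x - B (f - x) x := by
  obtain ⟨u, rfl⟩ : ∃ u, f = u + x := ⟨f - x, by abel⟩
  obtain ⟨v, rfl⟩ : ∃ v, g = v + x := ⟨g - x, by abel⟩
  simp only [add_sub_cancel_right] at hf hg ⊢
  rw [neg_left_of_add_left hBadd]
  linear_combination -hBadd u x (v + x) - hBalt u (v + x) - hBalt x (v + x) + hBadd v x u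
    + hBadd v x x + hs v hg u hf + hBalt x u + hBalt x x / 2

noncomputable def cosetPhase (B : X → X → ℝ) (s : AddSubgroup X) (f : X) : ℂ :=
  let x := (QuotientAddGroup.mk f : X ⧸ s).out
  Complex.exp (Complex.I * (B (f - x) x : ℂ) / 2)

theorem exp_neg_left_eq_conj_cosetPhase_mul (hBalt : ∀ f g : X, B f g = -B g f)
    (hBadd : ∀ f g h : X, B (f + g) h = B f h + B g h) {s : AddSubgroup X}
    (hs : ∀ f ∈ s, ∀ g ∈ s, B f g = 0) {f g : X}
    (hfg : (QuotientAddGroup.mk f : X ⧸ s) = QuotientAddGroup.mk g) :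
    Complex.exp (Complex.I * (B (-f) g : ℂ) / 2)
      = conj (cosetPhase B s f) * cosetPhase B s g := by
  have mem_of_out : ∀ y : X, y - (QuotientAddGroup.mk y : X ⧸ s).out ∈ s := fun y => by
    rw [← neg_add_eq_sub, ← QuotientAddGroup.eq, QuotientAddGroup.out_eq']
  have hphase := neg_left_eq_sub_of_isotropic hBalt hBadd hs (mem_of_out f)
    (hfg ▸ mem_of_out g)
  rw [cosetPhase, cosetPhase, ← hfg, ← Complex.exp_conj, ← Complex.exp_add, hphase]
  congr 1
  push_cast
  simp only [map_mul, map_div₀, Complex.conj_I, Complex.conj_ofReal, map_ofNat]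
  ring

end Symplectic

section ConstraintState

variable {X : Type*}

noncomputable def constraintState (s : Set X) : (X →₀ ℂ) →ₗ[ℂ] ℂ :=
  linearCombination ℂ (s.indicator 1)

theorem constraintState_single (s : Set X) (f : X) (c : ℂ) :
    constraintState s (single f c) = c * s.indicator 1 f := by
  rw [constraintState, linearCombination_single, smul_eq_mul]

theorem norm_constraintState_le (s : Set X) (a : X →₀ ℂ) :
    ‖constraintState s a‖ ≤ l1Norm a := by
  rw [constraintState, linearCombination_apply, Finsupp.sum, l1Norm, Finsupp.sum]
  refine (norm_sum_le _ _).trans (Finset.sum_le_sum fun f _ => ?_)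
  rw [smul_eq_mul, norm_mul]
  refine mul_le_of_le_one_right (norm_nonneg _) ((norm_indicator_le_norm_self _ _).trans ?_)
  simp

theorem exists_nonneg_constraintState_weylMul_weylStar_self [AddCommGroup X] {B : X → X → ℝ}
    (hBalt : ∀ f g : X, B f g = -B g f) (hBadd : ∀ f g h : X, B (f + g) h = B f h + B g h)
    (s : AddSubgroup X) (hs : ∀ f ∈ s, ∀ g ∈ s, B f g = 0) (a : X →₀ ℂ) :
    ∃ r : ℝ, 0 ≤ r ∧ constraintState (s : Set X) (weylMul B (weylStar a) a) = r := by
  classical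
  set b : X → ℂ := fun f => a f * cosetPhase B s f
  have double_sum : constraintState (s : Set X) (weylMul B (weylStar a) a)
      = ∑ f ∈ a.support, ∑ g ∈ a.support, conj (b f) * b g *
          (if (QuotientAddGroup.mk g : X ⧸ s) = QuotientAddGroup.mk f then 1 else 0) := by
    rw [weylMul_weylStar_self, map_finsuppSum, Finsupp.sum]
    refine Finset.sum_congr rfl fun f _ => ?_
    rw [map_finsuppSum, Finsupp.sum]
    refine Finset.sum_congr rfl fun g _ => ?_
    rw [constraintState_single]
    by_cases hfg : (QuotientAddGroup.mk f : X ⧸ s) = QuotientAddGroup.mk g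
    · have hmem : g - f ∈ s := by rwa [← neg_add_eq_sub, ← QuotientAddGroup.eq]
      rw [if_pos hfg.symm, Set.indicator_of_mem hmem,
        exp_neg_left_eq_conj_cosetPhase_mul hBalt hBadd hs hfg]
      simp only [b, map_mul, Pi.one_apply]
      ring
    · have hmem : g - f ∉ s := by rwa [← neg_add_eq_sub, ← QuotientAddGroup.eq]
      rw [if_neg (Ne.symm hfg), Set.indicator_of_notMem hmem, mul_zero, mul_zero]
  rw [double_sum, sum_sum_conj_mul_ite_eq_sum_normSq]
  exact ⟨_, Finset.sum_nonneg fun q _ => Complex.normSq_nonneg _, by push_cast; rfl⟩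

end ConstraintState

theorem stmt_17_general {X : Type*} [AddCommGroup X] [Module ℝ X] (B : X → X → ℝ)
    (hBalt : ∀ f g : X, B f g = - B g f)
    (hBadd : ∀ f g h : X, B (f + g) h = B f h + B g h)
    (s : Submodule ℝ X) (hs : ∀ f ∈ s, ∀ g ∈ s, B f g = 0) :
    ∃ ω : (X →₀ ℂ) →ₗ[ℂ] ℂ, IsStateW B ω ∧ ∀ f ∈ s, ω (Finsupp.single f 1) = 1 := by
  refine ⟨constraintState (s.toAddSubgroup : Set X), ⟨?_, ?_, norm_constraintState_le _⟩, ?_⟩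
  · simp [constraintState_single]
  · exact exists_nonneg_constraintState_weylMul_weylStar_self hBalt hBadd s.toAddSubgroup hs
  · intro f hf
    simp [constraintState_single, Set.indicator_of_mem hf]

/-- Let `(X,B)` be a (possibly degenerate) symplectic space and `s ⊆ X` a subspace with
`s` contained in its symplectic commutant, i.e. `B(f,g) = 0` for all `f, g ∈ s`.  Then the
unitary constraint set `{δ_f : f ∈ s}` in the CCR algebra over `(X,B)` is first class:
there is a (Dirac) state `ω` with `ω (δ_f) = 1` for all `f ∈ s`. -/
theorem stmt_17 {X : Type*} [AddCommGroup X] [Module ℝ X] (B : X → X → ℝ)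
    (hBalt : ∀ f g : X, B f g = - B g f)
    (hBadd : ∀ f g h : X, B (f + g) h = B f h + B g h)
    (hBsmul : ∀ (t : ℝ) (f g : X), B (t • f) g = t * B f g)
    (s : Submodule ℝ X) (hs : ∀ f ∈ s, ∀ g ∈ s, B f g = 0) :
    ∃ ω : (X →₀ ℂ) →ₗ[ℂ] ℂ, IsStateW B ω ∧ ∀ f ∈ s, ω (Finsupp.single f 1) = 1 :=
  stmt_17_general B hBalt hBadd s hs
end
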